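/- arXiv:1207.2030 — 6 statements merged into one kernel-verified Lean document; each statement's English description precedes it below -/
import Mathlib

section
/- Let (Ω, Υ, μ) be a measure space, ω₁, ω₂ : Ω → [0,∞) two μ-measurable weights, and 0 < p < ∞. Suppose Φ : I₁ → [0,∞) and Ψ : I₂ → [0,∞) are concave functions on open intervals I₁, I₂ with ω₁(x) ∈ I₁ and ω₂(x) ∈ I₂ for a.e. x, and 1 ≤ Φ(ω₁(x)) Ψ(ω₂(x)) for a.e. x ∈ Ω. Then for every f ∈ Lᵖ(Ω, μ) ∩ Lᵖ(Ω, ω₁ dμ) ∩ Lᵖ(Ω, ω₂ dμ) with f ≢ 0, 1 ≤ Φ( (∫_Ω |f|ᵖ ω₁ dμ) / ‖f‖ᵖ_{Lᵖ(μ)} ) · Ψ( (∫_Ω |f|ᵖ ω₂ dμ) / ‖f‖ᵖ_{Lᵖ(μ)} ). -/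
open Set MeasureTheory

/-! Let `mᵢ` be the average of `ωᵢ` against the weight `|f|ᵖ dμ`; it lies in `Iᵢ` because `Iᵢ` is
an interval. Concavity on the open interval gives affine majorants `a₁ ≥ Φ`, `a₂ ≥ Ψ` touching at
`m₁`, `m₂`, so the weighted averages of `a₁ ∘ ω₁` and `a₂ ∘ ω₂` are `Φ m₁` and `Ψ m₂`, while
`a₁(ω₁) a₂(ω₂) ≥ Φ(ω₁) Ψ(ω₂) ≥ 1` pointwise. For `a, b ≥ 0`, `1 ≤ a b` is equivalent to
`2 ≤ λ a + b / λ` for all `λ > 0`, a family of inequalities linear in `(a, b)`, so it passes from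
the pointwise values to the averages. -/

lemma ConvexOn.add_rightDeriv_mul_sub_le {S : Set ℝ} {f : ℝ → ℝ} (hf : ConvexOn ℝ S f)
    {c t : ℝ} (hc : c ∈ interior S) (ht : t ∈ S) :
    f c + derivWithin f (Ioi c) c * (t - c) ≤ f t := by
  rcases lt_trichotomy t c with htc | rfl | hct
  · have hslope : slope f t c ≤ derivWithin f (Ioi c) c :=
      (hf.slope_le_leftDeriv_of_mem_interior ht hc htc).trans
        (hf.leftDeriv_le_rightDeriv_of_mem_interior hc)
    rw [slope_def_field, div_le_iff₀ (sub_pos.2 htc)] at hslope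
    linarith
  · simp
  · have hslope : derivWithin f (Ioi c) c ≤ slope f c t :=
      hf.rightDeriv_le_slope_of_mem_interior hc ht hct
    rw [slope_def_field, le_div_iff₀ (sub_pos.2 hct)] at hslope
    linarith

lemma ConcaveOn.exists_le_add_mul_sub {S : Set ℝ} {f : ℝ → ℝ} (hf : ConcaveOn ℝ S f)
    {c : ℝ} (hc : c ∈ interior S) :
    ∃ b : ℝ, ∀ t ∈ S, f t ≤ f c + b * (t - c) := by
  refine ⟨-derivWithin (-f) (Ioi c) c, fun t ht => ?_⟩
  have := hf.neg.add_rightDeriv_mul_sub_le hc ht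
  simp only [Pi.neg_apply] at this
  linarith

lemma sq_le_mul_iff_forall_two_mul_le {a b c : ℝ} (ha : 0 ≤ a) (hb : 0 ≤ b) (hc : 0 ≤ c) :
    c ^ 2 ≤ a * b ↔ ∀ l > 0, 2 * c ≤ l * a + b / l := by
  constructor
  · intro h l hl
    rw [← sub_nonneg, show l * a + b / l - 2 * c = (l ^ 2 * a + b - 2 * l * c) / l by
      field_simp]
    apply div_nonneg _ hl.le
    rcases ha.eq_or_lt with rfl | ha
    · nlinarith
    · nlinarith [sq_nonneg (l * a - c)]
  · intro h
    rcases hc.eq_or_lt with rfl | hc'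
    · simpa using mul_nonneg ha hb
    rcases ha.eq_or_lt with rfl | ha'
    · have h' := h ((b + 1) / c) (by positivity)
      rw [mul_zero, zero_add, div_div_eq_mul_div, le_div_iff₀ (by positivity)] at h'
      nlinarith
    · have h' := h (c / a) (by positivity)
      rw [div_mul_cancel₀ _ ha'.ne', div_div_eq_mul_div] at h'
      have h'' : c ≤ b * a / c := by linarith
      rw [le_div_iff₀ hc'] at h''
      nlinarith

section WeightedAverage

variable {Ω : Type*} [MeasurableSpace Ω] {μ : Measure Ω} {g ω A B : Ω → ℝ}

noncomputable def weightedAverage (μ : Measure Ω) (g ω : Ω → ℝ) : ℝ :=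
  (∫ x, g x * ω x ∂μ) / ∫ x, g x ∂μ

lemma integrable_mul_affine (hg : Integrable g μ) (hgω : Integrable (fun x => g x * ω x) μ)
    (a b c : ℝ) : Integrable (fun x => g x * (a + b * (ω x - c))) μ := by
  have := (hg.const_mul (a - b * c)).add (hgω.const_mul b)
  refine this.congr (ae_of_all _ fun x => ?_)
  simp only [Pi.add_apply]
  ring

lemma integral_mul_sub_weightedAverage (hg : Integrable g μ)
    (hgω : Integrable (fun x => g x * ω x) μ) (hT : ∫ x, g x ∂μ ≠ 0) :
    ∫ x, g x * (ω x - weightedAverage μ g ω) ∂μ = 0 := by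
  simp_rw [mul_sub]
  rw [integral_sub hgω (hg.mul_const _), integral_mul_const, weightedAverage,
    mul_div_cancel₀ _ hT, sub_self]

lemma integral_mul_affine_weightedAverage (hg : Integrable g μ)
    (hgω : Integrable (fun x => g x * ω x) μ) (hT : ∫ x, g x ∂μ ≠ 0) (a b : ℝ) :
    ∫ x, g x * (a + b * (ω x - weightedAverage μ g ω)) ∂μ = a * ∫ x, g x ∂μ := by
  have hgω' : Integrable (fun x => g x * (ω x - weightedAverage μ g ω)) μ := by
    simpa only [mul_zero, zero_add, one_mul] using integrable_mul_affine hg hgω 0 1 _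
  simp_rw [mul_add, mul_left_comm _ b]
  rw [integral_add (hg.mul_const a) (hgω'.const_mul b), integral_mul_const, integral_const_mul,
    integral_mul_sub_weightedAverage hg hgω hT, mul_zero, add_zero, mul_comm]

lemma integral_mul_pos_of_pos (hg0 : ∀ᵐ x ∂μ, 0 ≤ g x) (hT : 0 < ∫ x, g x ∂μ)
    (hω : ∀ᵐ x ∂μ, 0 < ω x) (hgω : Integrable (fun x => g x * ω x) μ) :
    0 < ∫ x, g x * ω x ∂μ := by
  have hgω0 : ∀ᵐ x ∂μ, 0 ≤ g x * ω x := by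
    filter_upwards [hg0, hω] with x hgx hωx
    exact mul_nonneg hgx hωx.le
  refine (integral_nonneg_of_ae hgω0).lt_of_ne' fun h => ?_
  have hg : g =ᵐ[μ] 0 := by
    filter_upwards [(integral_eq_zero_iff_of_nonneg_ae hgω0 hgω).1 h, hω] with x hx hωx
    exact (mul_eq_zero.1 hx).resolve_right hωx.ne'
  rw [integral_congr_ae hg] at hT
  simp at hT

lemma weightedAverage_mem {I : Set ℝ} (hI : I.OrdConnected) (hg0 : ∀ᵐ x ∂μ, 0 ≤ g x)
    (hg : Integrable g μ) (hgω : Integrable (fun x => g x * ω x) μ) (hω : ∀ᵐ x ∂μ, ω x ∈ I)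
    (hT : 0 < ∫ x, g x ∂μ) :
    weightedAverage μ g ω ∈ I := by
  set m := weightedAverage μ g ω
  by_contra hm
  have hside : (∀ t ∈ I, m < t) ∨ ∀ t ∈ I, t < m := by
    by_contra! h
    obtain ⟨⟨t₁, ht₁, h₁⟩, t₂, ht₂, h₂⟩ := h
    exact hm (hI.out ht₁ ht₂ ⟨h₁, h₂⟩)
  have hzero := integral_mul_sub_weightedAverage hg hgω hT.ne'
  rcases hside with hI_gt | hI_lt
  · have := integral_mul_pos_of_pos hg0 hT (hω.mono fun x hx => sub_pos.2 (hI_gt _ hx))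
      (by simpa only [mul_zero, zero_add, one_mul] using integrable_mul_affine hg hgω 0 1 m)
    linarith
  · have := integral_mul_pos_of_pos hg0 hT (hω.mono fun x hx => sub_pos.2 (hI_lt _ hx))
      (by simpa only [zero_add, neg_mul, one_mul, neg_sub] using
        integrable_mul_affine hg hgω 0 (-1) m)
    have hneg : ∫ x, g x * (m - ω x) ∂μ = -∫ x, g x * (ω x - m) ∂μ := by
      rw [← integral_neg]
      congr 1 with x
      ring
    linarith

lemma sq_integral_le_integral_mul_mul_integral_mul (hg0 : ∀ᵐ x ∂μ, 0 ≤ g x)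
    (hg : Integrable g μ) (hgA : Integrable (fun x => g x * A x) μ)
    (hgB : Integrable (fun x => g x * B x) μ) (hA0 : ∀ᵐ x ∂μ, 0 ≤ A x)
    (hAB : ∀ᵐ x ∂μ, 1 ≤ A x * B x) :
    (∫ x, g x ∂μ) ^ 2 ≤ (∫ x, g x * A x ∂μ) * ∫ x, g x * B x ∂μ := by
  have hB0 : ∀ᵐ x ∂μ, 0 ≤ B x := by
    filter_upwards [hA0, hAB] with x hAx hABx
    exact (pos_of_mul_pos_right (one_pos.trans_le hABx) hAx).le
  have hmul_nonneg : ∀ {F : Ω → ℝ}, (∀ᵐ x ∂μ, 0 ≤ F x) → 0 ≤ ∫ x, g x * F x ∂μ := fun hF =>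
    integral_nonneg_of_ae (by filter_upwards [hg0, hF] with x hgx hFx using mul_nonneg hgx hFx)
  refine (sq_le_mul_iff_forall_two_mul_le (hmul_nonneg hA0) (hmul_nonneg hB0)
    (integral_nonneg_of_ae hg0)).2 fun l hl => ?_
  have hpointwise : ∀ᵐ x ∂μ, 2 * g x ≤ l * (g x * A x) + g x * B x / l := by
    filter_upwards [hg0, hA0, hB0, hAB] with x hgx hAx hBx hABx
    have h := (sq_le_mul_iff_forall_two_mul_le hAx hBx zero_le_one).1 (by simpa using hABx) l hl
    have := mul_le_mul_of_nonneg_left h hgx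
    rw [mul_add, mul_div_assoc'] at this
    linarith [mul_left_comm (g x) l (A x)]
  have := integral_mono_ae (hg.const_mul 2) ((hgA.const_mul l).add (hgB.div_const l)) hpointwise
  rwa [integral_const_mul, integral_add' (hgA.const_mul l) (hgB.div_const l), integral_const_mul,
    integral_div] at this

lemma one_le_mul_comp_weightedAverage {ω₁ ω₂ : Ω → ℝ} {I₁ I₂ : Set ℝ}
    (hI₁ : IsOpen I₁) (hI₁c : I₁.OrdConnected) (hI₂ : IsOpen I₂) (hI₂c : I₂.OrdConnected)
    {Φ Ψ : ℝ → ℝ} (hΦ : ConcaveOn ℝ I₁ Φ) (hΨ : ConcaveOn ℝ I₂ Ψ)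
    (hΦ0 : ∀ t ∈ I₁, 0 ≤ Φ t) (hΨ0 : ∀ t ∈ I₂, 0 ≤ Ψ t)
    (hmem₁ : ∀ᵐ x ∂μ, ω₁ x ∈ I₁) (hmem₂ : ∀ᵐ x ∂μ, ω₂ x ∈ I₂)
    (hpt : ∀ᵐ x ∂μ, 1 ≤ Φ (ω₁ x) * Ψ (ω₂ x))
    (hg0 : ∀ᵐ x ∂μ, 0 ≤ g x) (hg : Integrable g μ)
    (hg₁ : Integrable (fun x => g x * ω₁ x) μ) (hg₂ : Integrable (fun x => g x * ω₂ x) μ)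
    (hT : 0 < ∫ x, g x ∂μ) :
    1 ≤ Φ (weightedAverage μ g ω₁) * Ψ (weightedAverage μ g ω₂) := by
  set m₁ := weightedAverage μ g ω₁
  set m₂ := weightedAverage μ g ω₂
  have hm₁ : m₁ ∈ I₁ := weightedAverage_mem hI₁c hg0 hg hg₁ hmem₁ hT
  have hm₂ : m₂ ∈ I₂ := weightedAverage_mem hI₂c hg0 hg hg₂ hmem₂ hT
  obtain ⟨b₁, hb₁⟩ := hΦ.exists_le_add_mul_sub (hI₁.interior_eq.symm ▸ hm₁)
  obtain ⟨b₂, hb₂⟩ := hΨ.exists_le_add_mul_sub (hI₂.interior_eq.symm ▸ hm₂)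
  -- replace `Φ ∘ ω₁` and `Ψ ∘ ω₂` by their affine majorants, whose averages are `Φ m₁`, `Ψ m₂`
  have h := sq_integral_le_integral_mul_mul_integral_mul hg0 hg
    (integrable_mul_affine hg hg₁ (Φ m₁) b₁ m₁) (integrable_mul_affine hg hg₂ (Ψ m₂) b₂ m₂)
    (B := fun x => Ψ m₂ + b₂ * (ω₂ x - m₂))
    (by filter_upwards [hmem₁] with x hx using (hΦ0 _ hx).trans (hb₁ _ hx))
    (by
      filter_upwards [hmem₁, hmem₂, hpt] with x hx₁ hx₂ hx
      exact hx.trans (mul_le_mul (hb₁ _ hx₁) (hb₂ _ hx₂) (hΨ0 _ hx₂)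
        ((hΦ0 _ hx₁).trans (hb₁ _ hx₁))))
  rw [integral_mul_affine_weightedAverage hg hg₁ hT.ne',
    integral_mul_affine_weightedAverage hg hg₂ hT.ne'] at h
  have hT2 : 0 < (∫ x, g x ∂μ) ^ 2 := by positivity
  nlinarith

end WeightedAverage

theorem stmt2_general {Ω : Type*} [MeasurableSpace Ω] (μ : Measure Ω)
    (ω₁ ω₂ : Ω → ℝ)
    (p : ℝ)
    (I₁ I₂ : Set ℝ) (hI₁ : IsOpen I₁) (hI₁c : I₁.OrdConnected)
    (hI₂ : IsOpen I₂) (hI₂c : I₂.OrdConnected)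
    (Φ Ψ : ℝ → ℝ)
    (hΦ : ConcaveOn ℝ I₁ Φ) (hΨ : ConcaveOn ℝ I₂ Ψ)
    (hΦ0 : ∀ t ∈ I₁, 0 ≤ Φ t) (hΨ0 : ∀ t ∈ I₂, 0 ≤ Ψ t)
    (hmem₁ : ∀ᵐ x ∂μ, ω₁ x ∈ I₁) (hmem₂ : ∀ᵐ x ∂μ, ω₂ x ∈ I₂)
    (hpt : ∀ᵐ x ∂μ, 1 ≤ Φ (ω₁ x) * Ψ (ω₂ x))
    (f : Ω → ℝ)
    (hf : Integrable (fun x => |f x| ^ p) μ)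
    (hf₁ : Integrable (fun x => |f x| ^ p * ω₁ x) μ)
    (hf₂ : Integrable (fun x => |f x| ^ p * ω₂ x) μ)
    (hne : ¬ f =ᵐ[μ] 0) :
    1 ≤ Φ ((∫ x, |f x| ^ p * ω₁ x ∂μ) / ∫ x, |f x| ^ p ∂μ) *
        Ψ ((∫ x, |f x| ^ p * ω₂ x ∂μ) / ∫ x, |f x| ^ p ∂μ) := by
  have hT : 0 < ∫ x, |f x| ^ p ∂μ := by
    rw [integral_pos_iff_support_of_nonneg (fun x => by positivity) hf, pos_iff_ne_zero]
    refine fun h => hne (ae_iff.2 (measure_mono_null (fun x hx => ?_) h))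
    exact (Real.rpow_pos_of_pos (abs_pos.2 hx) p).ne'
  exact one_le_mul_comp_weightedAverage hI₁ hI₁c hI₂ hI₂c hΦ hΨ hΦ0 hΨ0 hmem₁ hmem₂ hpt
    (ae_of_all _ fun x => by positivity) hf hf₁ hf₂ hT

/-- Generalized Hölder / interpolation inequality: if `Φ`, `Ψ` are nonnegative concave
functions on open intervals containing a.e. the values of the weights `ω₁`, `ω₂`, and
`1 ≤ Φ(ω₁ x) Ψ(ω₂ x)` a.e., then for every `f ∈ Lᵖ(μ) ∩ Lᵖ(ω₁ dμ) ∩ Lᵖ(ω₂ dμ)`, `f ≢ 0`,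
`1 ≤ Φ((∫ |f|ᵖ ω₁ dμ)/∫ |f|ᵖ dμ) · Ψ((∫ |f|ᵖ ω₂ dμ)/∫ |f|ᵖ dμ)`. -/
theorem stmt2 {Ω : Type*} [MeasurableSpace Ω] (μ : Measure Ω)
    (ω₁ ω₂ : Ω → ℝ) (hω₁m : Measurable ω₁) (hω₂m : Measurable ω₂)
    (hω₁0 : ∀ x, 0 ≤ ω₁ x) (hω₂0 : ∀ x, 0 ≤ ω₂ x)
    (p : ℝ) (hp : 0 < p)
    (I₁ I₂ : Set ℝ) (hI₁ : IsOpen I₁) (hI₁c : I₁.OrdConnected)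
    (hI₂ : IsOpen I₂) (hI₂c : I₂.OrdConnected)
    (Φ Ψ : ℝ → ℝ)
    (hΦ : ConcaveOn ℝ I₁ Φ) (hΨ : ConcaveOn ℝ I₂ Ψ)
    (hΦ0 : ∀ t ∈ I₁, 0 ≤ Φ t) (hΨ0 : ∀ t ∈ I₂, 0 ≤ Ψ t)
    (hmem₁ : ∀ᵐ x ∂μ, ω₁ x ∈ I₁) (hmem₂ : ∀ᵐ x ∂μ, ω₂ x ∈ I₂)
    (hpt : ∀ᵐ x ∂μ, 1 ≤ Φ (ω₁ x) * Ψ (ω₂ x))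
    (f : Ω → ℝ) (hfm : AEStronglyMeasurable f μ)
    (hf : Integrable (fun x => |f x| ^ p) μ)
    (hf₁ : Integrable (fun x => |f x| ^ p * ω₁ x) μ)
    (hf₂ : Integrable (fun x => |f x| ^ p * ω₂ x) μ)
    (hne : ¬ f =ᵐ[μ] 0) :
    1 ≤ Φ ((∫ x, |f x| ^ p * ω₁ x ∂μ) / ∫ x, |f x| ^ p ∂μ) *
        Ψ ((∫ x, |f x| ^ p * ω₂ x ∂μ) / ∫ x, |f x| ^ p ∂μ) :=
  stmt2_general μ ω₁ ω₂ p I₁ I₂ hI₁ hI₁c hI₂ hI₂c Φ Ψ hΦ hΨ hΦ0 hΨ0 hmem₁ hmem₂ hpt f hf hf₁ hf₂ hne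
end

section
/- Let m ∈ [0,∞), 0 < M ≤ ∞, p ∈ [1,∞), and f : (m,∞) → (0,M) a nonincreasing convex function with f(t) → M as t → m⁺. Define φ_p(t) = f(t)/tᵖ for t > m. Then φ_p is convex and decreasing on (m,∞), its inverse φ_p⁻¹ : (0, M/mᵖ) → (m,∞) exists, and the function t ↦ 1/φ_p⁻¹(t) is concave and increasing on (0, M/mᵖ), with 1/φ_p⁻¹(t) → 0 as t → 0⁺. -/
/-!
`f t / tᵖ = f t · t⁻ᵖ` is a product of two nonnegative, convex, decreasing functions, hence convex.
It decreases strictly from `M/mᵖ` at `m⁺` to `0` at `∞`, so by continuity it is a bijection onto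
`(0, M/mᵖ)`. In the variable `u = 1/t` we have `φ_p(1/u) = u · f₁(1/u)` with `f₁ t = f t / tᵖ⁻¹`
convex: `u ↦ φ_p(1/u)` is the perspective of a convex function, hence convex, and it is increasing.
Its inverse is `1/φ_p⁻¹`, and the inverse of an increasing convex function is concave.
-/

open Set Function Filter Topology
open scoped ENNReal

theorem ConvexOn.mul_comp_inv {s : Set ℝ} {f : ℝ → ℝ} (hs : s ⊆ Ioi 0) (hf : ConvexOn ℝ s f) :
    ConvexOn ℝ (Inv.inv ⁻¹' s) (fun u => u * f u⁻¹) := by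
  have hpos : ∀ u ∈ Inv.inv ⁻¹' s, 0 < u := fun u hu => inv_pos.1 (hs hu)
  -- `(a u + b v)⁻¹` is the convex combination of `u⁻¹` and `v⁻¹` with weights `a u`, `b v`
  -- normalised by `a u + b v`.
  have key : ∀ ⦃u⦄, u ∈ Inv.inv ⁻¹' s → ∀ ⦃v⦄, v ∈ Inv.inv ⁻¹' s → ∀ ⦃a b : ℝ⦄, 0 ≤ a → 0 ≤ b →
      a + b = 1 → (a * u + b * v)⁻¹ ∈ s ∧
        (a * u + b * v) * f (a * u + b * v)⁻¹ ≤ a * (u * f u⁻¹) + b * (v * f v⁻¹) := by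
    intro u hu v hv a b ha hb hab
    have hu0 := hpos u hu
    have hv0 := hpos v hv
    have hw : 0 < a * u + b * v := by
      simpa only [smul_eq_mul, mem_Ioi] using convex_Ioi (0 : ℝ) hu0 hv0 ha hb hab
    set w := a * u + b * v
    have hcomb : (a * u / w) • u⁻¹ + (b * v / w) • v⁻¹ = w⁻¹ := by
      simp only [smul_eq_mul]; field_simp; rw [hab]
    have hμ : 0 ≤ a * u / w := by positivity
    have hν : 0 ≤ b * v / w := by positivity
    have hμν : a * u / w + b * v / w = 1 := by rw [← add_div, div_self hw.ne']
    have hconv := hf.2 hu hv hμ hν hμν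
    rw [hcomb] at hconv
    refine ⟨hcomb ▸ hf.1 hu hv hμ hν hμν, ?_⟩
    calc w * f w⁻¹ ≤ w * ((a * u / w) • f u⁻¹ + (b * v / w) • f v⁻¹) :=
          mul_le_mul_of_nonneg_left hconv hw.le
      _ = a * (u * f u⁻¹) + b * (v * f v⁻¹) := by simp only [smul_eq_mul]; field_simp
  refine ⟨fun u hu v hv a b ha hb hab => ?_, fun u hu v hv a b ha hb hab => ?_⟩
  · simpa only [mem_preimage, smul_eq_mul] using (key hu hv ha hb hab).1
  · simpa only [smul_eq_mul] using (key hu hv ha hb hab).2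

theorem convexOn_inv_rpow {q : ℝ} (hq : 0 ≤ q) : ConvexOn ℝ (Ioi 0) fun x : ℝ => (x ^ q)⁻¹ := by
  have h := ((convexOn_rpow (by linarith : 1 ≤ q + 1)).subset Ioi_subset_Ici_self
    (convex_Ioi 0)).mul_comp_inv subset_rfl
  refine (h.subset (fun x hx => inv_pos.2 hx) (convex_Ioi 0)).congr fun x hx => ?_
  have hx : 0 < x := hx
  show x * x⁻¹ ^ (q + 1) = _
  rw [Real.inv_rpow hx.le, Real.rpow_add hx, Real.rpow_one]
  field_simp

theorem ConvexOn.div_rpow {m q : ℝ} {f : ℝ → ℝ} (hm : 0 ≤ m) (hq : 0 ≤ q)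
    (hf : ConvexOn ℝ (Ioi m) f) (hf_anti : AntitoneOn f (Ioi m))
    (hf_nonneg : ∀ t ∈ Ioi m, 0 ≤ f t) :
    ConvexOn ℝ (Ioi m) fun t => f t / t ^ q := by
  have hsub : Ioi m ⊆ Ioi 0 := Ioi_subset_Ioi hm
  have hg_anti : AntitoneOn (fun x : ℝ => (x ^ q)⁻¹) (Ioi m) := fun x hx y _ hxy =>
    inv_anti₀ (Real.rpow_pos_of_pos (hsub hx) q) (Real.rpow_le_rpow (hsub hx).le hxy hq)
  refine (hf.mul ((convexOn_inv_rpow hq).subset hsub (convex_Ioi m)) hf_nonneg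
    (fun x hx => inv_nonneg.2 (Real.rpow_nonneg (hsub hx).le q))
    (hf_anti.monovaryOn hg_anti)).congr fun x _ => ?_
  simp [div_eq_mul_inv]

theorem ConvexOn.div_rpow_comp_inv {m p : ℝ} {f : ℝ → ℝ} (hm : 0 ≤ m) (hp : 1 ≤ p)
    (hf : ConvexOn ℝ (Ioi m) f) (hf_anti : AntitoneOn f (Ioi m))
    (hf_nonneg : ∀ t ∈ Ioi m, 0 ≤ f t) :
    ConvexOn ℝ (Inv.inv ⁻¹' Ioi m) fun u => f u⁻¹ / u⁻¹ ^ p := by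
  have hsub : Ioi m ⊆ Ioi 0 := Ioi_subset_Ioi hm
  refine ((hf.div_rpow hm (sub_nonneg.2 hp) hf_anti hf_nonneg).mul_comp_inv hsub).congr
    fun u hu => ?_
  have hu : 0 < u⁻¹ := hsub hu
  show u * (f u⁻¹ / u⁻¹ ^ (p - 1)) = f u⁻¹ / u⁻¹ ^ p
  rw [Real.rpow_sub_one hu.ne', div_div_eq_mul_div, mul_div_assoc', mul_left_comm,
    mul_inv_cancel₀ (inv_pos.1 hu).ne', mul_one]

theorem ConvexOn.concaveOn_of_rightInvOn {S T : Set ℝ} {h k : ℝ → ℝ} (hh : ConvexOn ℝ S h)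
    (hh_mono : StrictMonoOn h S) (hT : Convex ℝ T) (hk : MapsTo k T S) (hhk : RightInvOn k h T) :
    ConcaveOn ℝ T k := by
  refine ⟨hT, fun x hx y hy a b ha hb hab => ?_⟩
  have hS := hh.1 (hk hx) (hk hy) ha hb hab
  refine (hh_mono.le_iff_le hS (hk (hT hx hy ha hb hab))).1 ?_
  calc h (a • k x + b • k y) ≤ a • h (k x) + b • h (k y) := hh.2 (hk hx) (hk hy) ha hb hab
    _ = h (k (a • x + b • y)) := by rw [hhk hx, hhk hy, hhk (hT hx hy ha hb hab)]

theorem StrictMonoOn.of_rightInvOn {S T : Set ℝ} {h k : ℝ → ℝ} (hh : StrictMonoOn h S)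
    (hk : MapsTo k T S) (hhk : RightInvOn k h T) : StrictMonoOn k T := fun x hx y hy hxy =>
  (hh.lt_iff_lt (hk hx) (hk hy)).1 (by rwa [hhk hx, hhk hy])

theorem AntitoneOn.strictAntiOn_div_rpow {m p : ℝ} {f : ℝ → ℝ} (hm : 0 ≤ m) (hp : 0 < p)
    (hf : AntitoneOn f (Ioi m)) (hf_pos : ∀ t ∈ Ioi m, 0 < f t) :
    StrictAntiOn (fun t => f t / t ^ p) (Ioi m) := by
  intro a ha b hb hab
  have ha0 : 0 < a := hm.trans_lt ha
  calc f b / b ^ p < f b / a ^ p :=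
        div_lt_div_of_pos_left (hf_pos b hb) (Real.rpow_pos_of_pos ha0 p)
          (Real.rpow_lt_rpow ha0.le hab hp)
    _ ≤ f a / a ^ p := by gcongr; exact hf ha hb hab.le

theorem tendsto_ofReal_div_rpow_nhdsGT {m p : ℝ} {M : ℝ≥0∞} {f : ℝ → ℝ} (hm : 0 ≤ m) (hp : 0 < p)
    (hM : M ≠ 0) (hf : Tendsto (fun t => ENNReal.ofReal (f t)) (𝓝[>] m) (𝓝 M)) :
    Tendsto (fun t => ENNReal.ofReal (f t / t ^ p)) (𝓝[>] m) (𝓝 (M / ENNReal.ofReal (m ^ p))) := by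
  have hden : Tendsto (fun t : ℝ => ENNReal.ofReal (t ^ p)) (𝓝[>] m) (𝓝 (ENNReal.ofReal (m ^ p))) :=
    ENNReal.tendsto_ofReal <|
      (Real.continuousAt_rpow_const m p (Or.inr hp.le)).tendsto.mono_left nhdsWithin_le_nhds
  refine (ENNReal.Tendsto.div hf (Or.inl hM) hden (Or.inl ENNReal.ofReal_ne_top)).congr' ?_
  filter_upwards [self_mem_nhdsWithin] with t ht
  rw [ENNReal.ofReal_div_of_pos (Real.rpow_pos_of_pos (hm.trans_lt ht) p)]

theorem convex_setOf_pos_ofReal_lt (L : ℝ≥0∞) :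
    Convex ℝ {s : ℝ | 0 < s ∧ ENNReal.ofReal s < L} := convex_iff_ordConnected.2
  ⟨fun _ hx _ hy _ hz => ⟨hx.1.trans_le hz.1, (ENNReal.ofReal_le_ofReal hz.2).trans_lt hy.2⟩⟩

theorem setOf_pos_ofReal_lt_mem_nhdsGT {L : ℝ≥0∞} (hL : 0 < L) :
    {s : ℝ | 0 < s ∧ ENNReal.ofReal s < L} ∈ 𝓝[>] 0 := by
  have hlt : ∀ᶠ s in 𝓝 0, ENNReal.ofReal s < L :=
    (ENNReal.continuous_ofReal.tendsto 0).eventually (eventually_lt_nhds (by simpa using hL))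
  filter_upwards [self_mem_nhdsWithin, nhdsWithin_le_nhds hlt] with s hs0 hsL
  exact ⟨hs0, hsL⟩

theorem StrictAntiOn.bijOn_Ioi {φ : ℝ → ℝ} {m : ℝ} {L : ℝ≥0∞} (hanti : StrictAntiOn φ (Ioi m))
    (hcont : ContinuousOn φ (Ioi m)) (hpos : ∀ t ∈ Ioi m, 0 < φ t)
    (hlim : Tendsto (fun t => ENNReal.ofReal (φ t)) (𝓝[>] m) (𝓝 L))
    (htop : Tendsto φ atTop (𝓝 0)) :
    BijOn φ (Ioi m) {s | 0 < s ∧ ENNReal.ofReal s < L} := by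
  refine ⟨fun t ht => ⟨hpos t ht, ?_⟩, hanti.injOn, fun s ⟨hs0, hsL⟩ => ?_⟩
  · obtain ⟨t', ht'm, ht't⟩ := exists_between (mem_Ioi.1 ht)
    have hle : ENNReal.ofReal (φ t') ≤ L := by
      refine ge_of_tendsto hlim ?_
      filter_upwards [Ioo_mem_nhdsGT ht'm] with r hr
      exact ENNReal.ofReal_le_ofReal (hanti hr.1 ht'm hr.2).le
    exact ((ENNReal.ofReal_lt_ofReal_iff (hpos t' ht'm)).2 (hanti ht'm ht ht't)).trans_le hle
  · obtain ⟨a, has, ham⟩ := ((hlim.eventually (eventually_gt_nhds hsL)).and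
      self_mem_nhdsWithin).exists
    obtain ⟨b, hbs, hab⟩ := ((htop.eventually (eventually_lt_nhds hs0)).and
      (eventually_ge_atTop a)).exists
    have hIcc : Icc a b ⊆ Ioi m := fun x hx => lt_of_lt_of_le ham hx.1
    obtain ⟨t, ht, hts⟩ := intermediate_value_Icc' hab (hcont.mono hIcc)
      ⟨hbs.le, (ENNReal.ofReal_lt_ofReal_iff'.1 has).1.le⟩
    exact ⟨t, hIcc ht, hts⟩

theorem StrictAntiOn.tendsto_atTop_of_rightInvOn {φ g : ℝ → ℝ} {m : ℝ} {T : Set ℝ}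
    (hanti : StrictAntiOn φ (Ioi m)) (hpos : ∀ t ∈ Ioi m, 0 < φ t) (hg : MapsTo g T (Ioi m))
    (hφg : RightInvOn g φ T) (hT : T ∈ 𝓝[>] 0) : Tendsto g (𝓝[>] 0) atTop := by
  refine tendsto_atTop.2 fun b => ?_
  have hb : max b (m + 1) ∈ Ioi m := lt_max_of_lt_right (lt_add_one m)
  filter_upwards [hT, Ioo_mem_nhdsGT (hpos _ hb)] with s hs hsb
  rw [← hφg hs] at hsb
  exact (le_max_left b (m + 1)).trans ((hanti.lt_iff_gt (hg hs) hb).1 hsb.2).le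

/-- Lemma on weighted quotients: if `f : (m,∞) → (0,M)` is nonincreasing, convex, with
`f(t) → M` as `t → m⁺` and `f(t) → 0` at `∞`, and `p ≥ 1`, then `φ_p(t) = f(t)/tᵖ` is
convex and strictly decreasing on `(m,∞)`, maps `(m,∞)` bijectively onto `(0, M/mᵖ)`,
and `t ↦ 1/φ_p⁻¹(t)` is concave, strictly increasing on `(0, M/mᵖ)` and tends to `0`
at `0⁺`.  (Convention: `M/mᵖ = ∞` if `m = 0` or `M = ∞`.) -/
theorem stmt3 (m : ℝ) (hm : 0 ≤ m) (M : ℝ≥0∞) (hM : 0 < M) (p : ℝ) (hp : 1 ≤ p)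
    (f : ℝ → ℝ)
    (hf_pos : ∀ t ∈ Ioi m, 0 < f t ∧ ENNReal.ofReal (f t) < M)
    (hf_anti : AntitoneOn f (Ioi m))
    (hf_conv : ConvexOn ℝ (Ioi m) f)
    (hf_lim : Tendsto (fun t => ENNReal.ofReal (f t)) (nhdsWithin m (Ioi m)) (nhds M))
    (hf_top : Tendsto f atTop (nhds 0)) :
    ConvexOn ℝ (Ioi m) (fun t => f t / t ^ p) ∧
    StrictAntiOn (fun t => f t / t ^ p) (Ioi m) ∧
    Set.BijOn (fun t => f t / t ^ p) (Ioi m)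
      {s : ℝ | 0 < s ∧ ENNReal.ofReal s < M / ENNReal.ofReal (m ^ p)} ∧
    ConcaveOn ℝ {s : ℝ | 0 < s ∧ ENNReal.ofReal s < M / ENNReal.ofReal (m ^ p)}
      (fun s => 1 / Function.invFunOn (fun t => f t / t ^ p) (Ioi m) s) ∧
    StrictMonoOn (fun s => 1 / Function.invFunOn (fun t => f t / t ^ p) (Ioi m) s)
      {s : ℝ | 0 < s ∧ ENNReal.ofReal s < M / ENNReal.ofReal (m ^ p)} ∧
    Tendsto (fun s => 1 / Function.invFunOn (fun t => f t / t ^ p) (Ioi m) s)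
      (nhdsWithin 0 (Ioi 0)) (nhds 0) := by
  have hp0 : 0 < p := by linarith
  have hsub : Ioi m ⊆ Ioi 0 := Ioi_subset_Ioi hm
  have hf_nonneg : ∀ t ∈ Ioi m, 0 ≤ f t := fun t ht => (hf_pos t ht).1.le
  set φ : ℝ → ℝ := fun t => f t / t ^ p
  set T : Set ℝ := {s : ℝ | 0 < s ∧ ENNReal.ofReal s < M / ENNReal.ofReal (m ^ p)}
  have hφ_pos : ∀ t ∈ Ioi m, 0 < φ t := fun t ht =>
    div_pos (hf_pos t ht).1 (Real.rpow_pos_of_pos (hsub ht) p)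
  have hconv : ConvexOn ℝ (Ioi m) φ := hf_conv.div_rpow hm hp0.le hf_anti hf_nonneg
  have hanti : StrictAntiOn φ (Ioi m) :=
    hf_anti.strictAntiOn_div_rpow hm hp0 fun t ht => (hf_pos t ht).1
  have hbij : BijOn φ (Ioi m) T := hanti.bijOn_Ioi (hconv.continuousOn isOpen_Ioi) hφ_pos
    (tendsto_ofReal_div_rpow_nhdsGT hm hp0 hM.ne' hf_lim)
    (by simpa using hf_top.div_atTop (tendsto_rpow_atTop hp0))
  set g := invFunOn φ (Ioi m)
  have hg : MapsTo g T (Ioi m) := hbij.surjOn.mapsTo_invFunOn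
  have hφg : RightInvOn g φ T := hbij.invOn_invFunOn.2
  have hh : ConvexOn ℝ (Inv.inv ⁻¹' Ioi m) fun u => φ u⁻¹ :=
    hf_conv.div_rpow_comp_inv hm hp hf_anti hf_nonneg
  have hh_mono : StrictMonoOn (fun u => φ u⁻¹) (Inv.inv ⁻¹' Ioi m) := fun u hu v hv huv =>
    hanti hv hu (inv_strictAnti₀ (inv_pos.1 (hsub hu)) huv)
  have hk : MapsTo (fun s => 1 / g s) T (Inv.inv ⁻¹' Ioi m) := fun s hs => by simpa using hg hs
  have hhk : RightInvOn (fun s => 1 / g s) (fun u => φ u⁻¹) T := fun s hs => by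
    simpa using hφg hs
  have hT_nhds : T ∈ 𝓝[>] 0 :=
    setOf_pos_ofReal_lt_mem_nhdsGT (ENNReal.div_pos hM.ne' ENNReal.ofReal_ne_top)
  refine ⟨hconv, hanti, hbij,
    hh.concaveOn_of_rightInvOn hh_mono (convex_setOf_pos_ofReal_lt _) hk hhk,
    hh_mono.of_rightInvOn hk hhk, ?_⟩
  exact (tendsto_inv_atTop_zero.comp
    (hanti.tendsto_atTop_of_rightInvOn hφ_pos hg hφg hT_nhds)).congr fun s => (one_div _).symm
end

section
/- Let A ≥ 1 and Ω = ℝᴺ \ \overline{B}(0,1). For every f ∈ L²(Ω; ℂ), f ≢ 0, with |x| f(x) ∈ L²(Ω; ℂ), one has ‖f‖_{L²(Ω)} ≤ 2 (∫_Ω |f(x)|² |x|² dx)^{1/2} · A / ( A + ln( ‖f‖²_{L²(Ω)} / ∫_Ω |f(x)|² e^{−A|x|} dx ) ). -/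
/-!
Write `I = ∫ |f|²`, `J = ∫ |f|² |x|²`, `K = ∫ |f|² e^{-A|x|}` and `S = ∫ |f|² |x|` over `Ω`.
Jensen's inequality for `exp` and the probability measure `|f|² dx / I` gives
`K ≥ I e^{-A S / I}`, i.e. `log (I / K) ≤ A S / I`, and Cauchy–Schwarz gives `S ≤ √I √J`.
Hence `√I · log (I / K) ≤ A √J`, while `√I ≤ √J` because `|x| > 1` on `Ω`.
-/

open MeasureTheory

section WeightedIntegrals

variable {α : Type*} [MeasurableSpace α] {μ : Measure α} {g r : α → ℝ}

lemma integrable_mul_of_integrable_mul_sq (hg0 : 0 ≤ᵐ[μ] g) (hg : Integrable g μ)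
    (hgr2 : Integrable (fun x => g x * r x ^ 2) μ) (hr : AEStronglyMeasurable r μ) :
    Integrable (fun x => g x * r x) μ := by
  refine (hg.add hgr2).mono (hg.1.mul hr) ?_
  filter_upwards [hg0] with x (hx : 0 ≤ g x)
  simp only [Pi.add_apply, Real.norm_eq_abs]
  rw [abs_mul, abs_of_nonneg hx, abs_of_nonneg (add_nonneg hx (mul_nonneg hx (sq_nonneg _)))]
  nlinarith [mul_nonneg hx (sq_nonneg (|r x| - 1)), sq_abs (r x)]

lemma integrable_mul_exp_neg_mul (hg : Integrable g μ) (hr : AEStronglyMeasurable r μ)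
    {t : ℝ} (htr : ∀ᵐ x ∂μ, 0 ≤ t * r x) :
    Integrable (fun x => g x * Real.exp (-t * r x)) μ := by
  refine hg.mono (hg.1.mul (Real.continuous_exp.comp_aestronglyMeasurable
    (hr.const_mul (-t)))) ?_
  filter_upwards [htr] with x hx
  rw [norm_mul, Real.norm_of_nonneg (Real.exp_pos _).le]
  exact mul_le_of_le_one_right (norm_nonneg _) (Real.exp_le_one_iff.2 (by linarith))

/-- Cauchy–Schwarz for the weight `g`: the quadratic `t ↦ ∫ g (t - r)²` is nonnegative. -/
lemma sq_integral_mul_le_integral_mul_integral_mul_sq (hg0 : 0 ≤ᵐ[μ] g) (hg : Integrable g μ)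
    (hgr : Integrable (fun x => g x * r x) μ) (hgr2 : Integrable (fun x => g x * r x ^ 2) μ) :
    (∫ x, g x * r x ∂μ) ^ 2 ≤ (∫ x, g x ∂μ) * ∫ x, g x * r x ^ 2 ∂μ := by
  have hquad : ∀ t : ℝ, 0 ≤ (∫ x, g x ∂μ) * (t * t) + (-2 * ∫ x, g x * r x ∂μ) * t +
      ∫ x, g x * r x ^ 2 ∂μ := fun t => by
    have hint : Integrable (fun x => g x * (t * t) + -2 * (g x * r x) * t) μ :=
      (hg.mul_const _).add ((hgr.const_mul _).mul_const _)
    have h := integral_nonneg_of_ae (μ := μ) (f := fun x => g x * (t - r x) ^ 2)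
      (by filter_upwards [hg0] with x hx using mul_nonneg hx (sq_nonneg _))
    have hexpand : ∫ x, g x * (t - r x) ^ 2 ∂μ =
        ∫ x, g x * (t * t) + -2 * (g x * r x) * t + g x * r x ^ 2 ∂μ :=
      integral_congr_ae (ae_of_all _ fun x => by ring)
    rw [hexpand, integral_add hint hgr2,
      integral_add (hg.mul_const _) ((hgr.const_mul _).mul_const _), integral_mul_const,
      integral_mul_const, integral_const_mul] at h
    exact h
  have hdisc := discrim_le_zero hquad
  rw [discrim] at hdisc
  linarith

/-- Jensen's inequality for `exp` and the probability measure `g μ / ∫ g`, via the tangent line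
of `exp` at the mean `-c` of `-t r`. -/
lemma integral_mul_exp_neg_div_le_integral_mul_exp_neg (hg0 : 0 ≤ᵐ[μ] g) (hg : Integrable g μ)
    (hgr : Integrable (fun x => g x * r x) μ)
    {t : ℝ} (hge : Integrable (fun x => g x * Real.exp (-t * r x)) μ) (hI : 0 < ∫ x, g x ∂μ) :
    (∫ x, g x ∂μ) * Real.exp (-t * (∫ x, g x * r x ∂μ) / ∫ x, g x ∂μ) ≤
      ∫ x, g x * Real.exp (-t * r x) ∂μ := by
  set c := t * (∫ x, g x * r x ∂μ) / ∫ x, g x ∂μ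
  have htangent : ∀ᵐ x ∂μ, Real.exp (-c) * ((1 + c) * g x - t * (g x * r x)) ≤
      g x * Real.exp (-t * r x) := by
    filter_upwards [hg0] with x hx
    have h := Real.add_one_le_exp (c - t * r x)
    have hsplit : Real.exp (-t * r x) = Real.exp (-c) * Real.exp (c - t * r x) := by
      rw [← Real.exp_add]; ring_nf
    rw [hsplit]
    nlinarith [mul_le_mul_of_nonneg_left h (mul_nonneg hx (Real.exp_pos (-c)).le)]
  have hint : Integrable (fun x => (1 + c) * g x - t * (g x * r x)) μ :=
    (hg.const_mul _).sub (hgr.const_mul _)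
  have hmono := integral_mono_ae (hint.const_mul (Real.exp (-c))) hge htangent
  rw [integral_const_mul, integral_sub (hg.const_mul _) (hgr.const_mul _),
    integral_const_mul, integral_const_mul] at hmono
  have hcI : c * ∫ x, g x ∂μ = t * ∫ x, g x * r x ∂μ := by
    simp only [c]; field_simp
  rw [neg_mul, neg_div]
  calc (∫ x, g x ∂μ) * Real.exp (-c)
      = Real.exp (-c) * ((1 + c) * (∫ x, g x ∂μ) - t * ∫ x, g x * r x ∂μ) := by
        rw [← hcI]; ring
    _ ≤ _ := hmono

lemma log_integral_div_integral_mul_exp_neg_le (hg0 : 0 ≤ᵐ[μ] g) (hg : Integrable g μ)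
    (hgr : Integrable (fun x => g x * r x) μ) {t : ℝ}
    (hge : Integrable (fun x => g x * Real.exp (-t * r x)) μ) (hI : 0 < ∫ x, g x ∂μ) :
    Real.log ((∫ x, g x ∂μ) / ∫ x, g x * Real.exp (-t * r x) ∂μ) ≤
      t * (∫ x, g x * r x ∂μ) / ∫ x, g x ∂μ := by
  have hjensen := integral_mul_exp_neg_div_le_integral_mul_exp_neg hg0 hg hgr hge hI
  rw [neg_mul, neg_div] at hjensen
  have hK : 0 < ∫ x, g x * Real.exp (-t * r x) ∂μ :=
    (mul_pos hI (Real.exp_pos _)).trans_le hjensen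
  rw [Real.log_le_iff_le_exp (div_pos hI hK), div_le_iff₀ hK]
  calc ∫ x, g x ∂μ
      = (∫ x, g x ∂μ) * Real.exp (-(t * (∫ x, g x * r x ∂μ) / ∫ x, g x ∂μ)) *
          Real.exp (t * (∫ x, g x * r x ∂μ) / ∫ x, g x ∂μ) := by
        rw [mul_assoc, ← Real.exp_add, neg_add_cancel, Real.exp_zero, mul_one]
    _ ≤ _ := by rw [mul_comm (Real.exp _)]; gcongr

lemma log_integral_div_integral_mul_exp_neg_nonneg (hg0 : 0 ≤ᵐ[μ] g) (hg : Integrable g μ)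
    (hr : AEStronglyMeasurable r μ) {t : ℝ} (htr : ∀ᵐ x ∂μ, 0 ≤ t * r x) :
    0 ≤ Real.log ((∫ x, g x ∂μ) / ∫ x, g x * Real.exp (-t * r x) ∂μ) := by
  have hKI : ∫ x, g x * Real.exp (-t * r x) ∂μ ≤ ∫ x, g x ∂μ := by
    refine integral_mono_ae (integrable_mul_exp_neg_mul hg hr htr) hg ?_
    filter_upwards [hg0, htr] with x hx htx
    exact mul_le_of_le_one_right hx (Real.exp_le_one_iff.2 (by linarith))
  have hK0 : 0 ≤ ∫ x, g x * Real.exp (-t * r x) ∂μ := integral_nonneg_of_ae <| by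
    filter_upwards [hg0] with x hx using mul_nonneg hx (Real.exp_pos _).le
  rcases hK0.eq_or_lt with hK | hK
  · rw [← hK, div_zero, Real.log_zero]
  · exact Real.log_nonneg ((one_le_div hK).2 hKI)

end WeightedIntegrals

lemma integral_norm_sq_pos {α E : Type*} [MeasurableSpace α] [NormedAddCommGroup E]
    {μ : Measure α} {f : α → E} (hf : Integrable (fun x => ‖f x‖ ^ 2) μ) (hne : ¬ f =ᵐ[μ] 0) :
    0 < ∫ x, ‖f x‖ ^ 2 ∂μ := by
  refine (integral_nonneg fun x => by positivity).lt_of_ne fun h => hne ?_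
  filter_upwards [(integral_eq_zero_iff_of_nonneg (fun x => by positivity) hf).1 h.symm]
    with x hx
  simpa using hx

lemma sqrt_le_two_mul_sqrt_mul_div_add {A I J S L : ℝ} (hA : 0 < A) (hI : 0 < I) (hIJ : I ≤ J)
    (hCS : S ^ 2 ≤ I * J) (hL0 : 0 ≤ L) (hL : L ≤ A * S / I) :
    √I ≤ 2 * √J * A / (A + L) := by
  have hsI : 0 < √I := Real.sqrt_pos.2 hI
  have hS : S ≤ √I * √J := by
    rw [← Real.sqrt_mul hI.le]
    exact (le_abs_self S).trans (Real.abs_le_sqrt hCS)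
  have hLI : L * (√I * √I) ≤ A * (√I * √J) := by
    rw [Real.mul_self_sqrt hI.le]
    calc L * I ≤ A * S := (le_div_iff₀ hI).1 hL
      _ ≤ _ := by gcongr
  have hLJ : √I * L ≤ A * √J := by nlinarith
  have hIJ' : √I ≤ √J := Real.sqrt_le_sqrt hIJ
  rw [le_div_iff₀ (by positivity)]
  nlinarith

theorem stmt10_general (N : ℕ) (A : ℝ) (hA : 1 ≤ A)
    (f : EuclideanSpace ℝ (Fin N) → ℂ)
    (hf2 : Integrable (fun x => ‖f x‖ ^ 2) (volume.restrict {x | 1 < ‖x‖}))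
    (hfx : Integrable (fun x => ‖f x‖ ^ 2 * ‖x‖ ^ 2)
      (volume.restrict {x | 1 < ‖x‖}))
    (hne : ¬ f =ᵐ[volume.restrict {x | 1 < ‖x‖}] 0) :
    Real.sqrt (∫ x in {x : EuclideanSpace ℝ (Fin N) | 1 < ‖x‖}, ‖f x‖ ^ 2) ≤
      2 * Real.sqrt (∫ x in {x : EuclideanSpace ℝ (Fin N) | 1 < ‖x‖},
          ‖f x‖ ^ 2 * ‖x‖ ^ 2) *
        A / (A + Real.log
          ((∫ x in {x : EuclideanSpace ℝ (Fin N) | 1 < ‖x‖}, ‖f x‖ ^ 2) /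
            ∫ x in {x : EuclideanSpace ℝ (Fin N) | 1 < ‖x‖},
              ‖f x‖ ^ 2 * Real.exp (-A * ‖x‖))) := by
  have hΩ : ∀ᵐ x ∂(volume.restrict {x : EuclideanSpace ℝ (Fin N) | 1 < ‖x‖}), 1 < ‖x‖ :=
    ae_restrict_mem (measurableSet_lt measurable_const measurable_norm)
  have hg0 : 0 ≤ᵐ[volume.restrict {x | 1 < ‖x‖}] fun x => ‖f x‖ ^ 2 :=
    ae_of_all _ fun x => by positivity
  have hr : AEStronglyMeasurable (fun x : EuclideanSpace ℝ (Fin N) => ‖x‖)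
      (volume.restrict {x | 1 < ‖x‖}) := continuous_norm.aestronglyMeasurable
  have hAr : ∀ᵐ x ∂(volume.restrict {x : EuclideanSpace ℝ (Fin N) | 1 < ‖x‖}), 0 ≤ A * ‖x‖ :=
    ae_of_all _ fun x => mul_nonneg (by linarith) (norm_nonneg x)
  have hgr := integrable_mul_of_integrable_mul_sq hg0 hf2 hfx hr
  have hI := integral_norm_sq_pos hf2 hne
  refine sqrt_le_two_mul_sqrt_mul_div_add (by linarith) hI ?_
    (sq_integral_mul_le_integral_mul_integral_mul_sq hg0 hf2 hgr hfx)
    (log_integral_div_integral_mul_exp_neg_nonneg hg0 hf2 hr hAr)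
    (log_integral_div_integral_mul_exp_neg_le hg0 hf2 hgr
      (integrable_mul_exp_neg_mul hf2 hr hAr) hI)
  refine integral_mono_ae hf2 hfx ?_
  filter_upwards [hΩ] with x hx
  exact le_mul_of_one_le_right (by positivity) (one_le_pow₀ hx.le)

/-- Inequality (2.12): for `A ≥ 1`, `Ω = ℝᴺ \ B̄(0,1)` and `f ∈ L²(Ω;ℂ)`, `f ≢ 0`, with
`|x| f(x) ∈ L²(Ω;ℂ)`,
`‖f‖_{L²} ≤ 2 (∫ |f|²|x|²)^{1/2} · A / (A + ln(‖f‖²_{L²} / ∫ |f|² e^{-A|x|}))`. -/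
theorem stmt10 (N : ℕ) (A : ℝ) (hA : 1 ≤ A)
    (f : EuclideanSpace ℝ (Fin N) → ℂ)
    (hfm : AEStronglyMeasurable f (volume.restrict {x | 1 < ‖x‖}))
    (hf2 : Integrable (fun x => ‖f x‖ ^ 2) (volume.restrict {x | 1 < ‖x‖}))
    (hfx : Integrable (fun x => ‖f x‖ ^ 2 * ‖x‖ ^ 2)
      (volume.restrict {x | 1 < ‖x‖}))
    (hne : ¬ f =ᵐ[volume.restrict {x | 1 < ‖x‖}] 0) :
    Real.sqrt (∫ x in {x : EuclideanSpace ℝ (Fin N) | 1 < ‖x‖}, ‖f x‖ ^ 2) ≤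
      2 * Real.sqrt (∫ x in {x : EuclideanSpace ℝ (Fin N) | 1 < ‖x‖},
          ‖f x‖ ^ 2 * ‖x‖ ^ 2) *
        A / (A + Real.log
          ((∫ x in {x : EuclideanSpace ℝ (Fin N) | 1 < ‖x‖}, ‖f x‖ ^ 2) /
            ∫ x in {x : EuclideanSpace ℝ (Fin N) | 1 < ‖x‖},
              ‖f x‖ ^ 2 * Real.exp (-A * ‖x‖))) :=
  stmt10_general N A hA f hf2 hfx hne
end

section
/- Let A ≥ 1 and let u = (u_n)_{n≥1} ∈ ℓ²(ℕ; ℂ), u ≢ 0, be such that (n u_n)_{n≥1} ∈ ℓ²(ℕ; ℂ). Then ‖u‖_{ℓ²} ≤ 2 (∑_{n=1}^∞ n² |u_n|²)^{1/2} · A / ( A − ln( (1/‖u‖²_{ℓ²}) ∑_{n=1}^∞ e^{−An} |u_n|² ) ). -/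
/-!
Write `w n = |u_n|²`, `S = ∑ w n`, `T = ∑ n² w n` and `ℓ = ln(∑ e^{-An} w n / S)`.
By Jensen's inequality for `exp` and the probability weights `w n / S`,
`-ℓ ≤ A · (∑ n w n) / S`, and by Cauchy–Schwarz `∑ n w n ≤ √T √S`; hence `-ℓ ≤ A √T / √S`.
Since `u 0 = 0`, also `S ≤ T`, so `A - ℓ ≤ 2 A √T / √S`, while `ℓ ≤ 0` makes `A - ℓ` positive.
-/

section WeightedSums

variable {ι : Type*} {w x : ι → ℝ}

theorem summable_mul_of_summable_sq_mul (hw : ∀ i, 0 ≤ w i) (hw_sum : Summable w)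
    (hx : Summable fun i => x i ^ 2 * w i) : Summable fun i => x i * w i := by
  refine (hx.add hw_sum).of_norm_bounded fun i => ?_
  rw [Real.norm_eq_abs, abs_mul, abs_of_nonneg (hw i)]
  nlinarith [hw i, sq_nonneg (|x i| - 1), sq_abs (x i)]

theorem sq_tsum_mul_le_tsum_sq_mul_mul_tsum (hw : ∀ i, 0 ≤ w i) (hw_sum : Summable w)
    (hx : Summable fun i => x i ^ 2 * w i) :
    (∑' i, x i * w i) ^ 2 ≤ (∑' i, x i ^ 2 * w i) * ∑' i, w i := by
  have hxw := summable_mul_of_summable_sq_mul hw hw_sum hx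
  -- `∑ (t x_i - 1)² w_i` is a nonnegative quadratic polynomial in `t`.
  have hquad : ∀ t : ℝ, 0 ≤ (∑' i, x i ^ 2 * w i) * (t * t) + (-2 * ∑' i, x i * w i) * t
      + ∑' i, w i := fun t => by
    have hsum := ((hx.hasSum.mul_right (t * t)).add (hxw.hasSum.mul_right (-2 * t))).add
      hw_sum.hasSum
    have := hsum.nonneg fun i => by
      linear_combination mul_nonneg (sq_nonneg (t * x i - 1)) (hw i)
    linear_combination this
  have := discrim_le_zero hquad
  rw [discrim] at this
  linear_combination this / 4

theorem tsum_mul_div_tsum_le_log_tsum_exp_mul_div_tsum (hw : ∀ i, 0 ≤ w i)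
    (hw_sum : Summable w) (hw_pos : 0 < ∑' i, w i) (hxw : Summable fun i => x i * w i)
    (hexw : Summable fun i => Real.exp (x i) * w i) :
    (∑' i, x i * w i) / ∑' i, w i ≤ Real.log ((∑' i, Real.exp (x i) * w i) / ∑' i, w i) := by
  set c := (∑' i, x i * w i) / ∑' i, w i with hc
  -- Sum the tangent line `exp c * (1 + (y - c)) ≤ exp y` against `w`.
  have htangent := ((hw_sum.hasSum.mul_left (1 - c)).add hxw.hasSum).mul_left (Real.exp c)
  have hle := hasSum_le (fun i => ?_) htangent hexw.hasSum
  · have hmean : (1 - c) * ∑' i, w i + ∑' i, x i * w i = ∑' i, w i := by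
      rw [hc]; field_simp; ring
    rw [hmean] at hle
    have hexp_pos : 0 < ∑' i, Real.exp (x i) * w i := lt_of_lt_of_le (by positivity) hle
    rw [Real.le_log_iff_exp_le (by positivity), le_div_iff₀ hw_pos]
    exact hle
  · have h := mul_le_mul_of_nonneg_left (Real.add_one_le_exp (x i - c)) (Real.exp_pos c).le
    rw [← Real.exp_add, add_sub_cancel] at h
    linear_combination mul_le_mul_of_nonneg_right h (hw i)

theorem neg_log_tsum_exp_neg_mul_div_tsum_mul_sqrt_le {a : ℝ} (ha : 0 ≤ a)
    (hw : ∀ i, 0 ≤ w i) (hw_sum : Summable w) (hw_pos : 0 < ∑' i, w i)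
    (hx : Summable fun i => x i ^ 2 * w i)
    (hexw : Summable fun i => Real.exp (-a * x i) * w i) :
    -Real.log ((∑' i, Real.exp (-a * x i) * w i) / ∑' i, w i) * √(∑' i, w i) ≤
      a * √(∑' i, x i ^ 2 * w i) := by
  set S := ∑' i, w i
  set M := ∑' i, x i * w i
  set ℓ := Real.log ((∑' i, Real.exp (-a * x i) * w i) / S)
  have hxw := summable_mul_of_summable_sq_mul hw hw_sum hx
  have hjensen : -a * M / S ≤ ℓ := by
    have := tsum_mul_div_tsum_le_log_tsum_exp_mul_div_tsum (x := fun i => -a * x i) hw hw_sum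
      hw_pos (by simpa only [mul_assoc] using hxw.mul_left (-a)) hexw
    simpa only [mul_assoc, tsum_mul_left] using this
  have hcauchy : M ≤ √(∑' i, x i ^ 2 * w i) * √S := by
    rw [← Real.sqrt_mul (tsum_nonneg fun i => mul_nonneg (sq_nonneg _) (hw i))]
    exact (le_abs_self M).trans
      (Real.abs_le_sqrt (sq_tsum_mul_le_tsum_sq_mul_mul_tsum hw hw_sum hx))
  have hsS : 0 < √S := Real.sqrt_pos.mpr hw_pos
  rw [neg_mul, div_le_iff₀ hw_pos, ← Real.mul_self_sqrt hw_pos.le] at hjensen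
  refine le_of_mul_le_mul_right ?_ hsS
  nlinarith [mul_le_mul_of_nonneg_left hcauchy ha]

end WeightedSums

theorem stmt11_general (A : ℝ) (hA : 1 ≤ A) (u : ℕ → ℂ) (h0 : u 0 = 0)
    (hnu : Summable (fun n : ℕ => (n : ℝ) ^ 2 * ‖u n‖ ^ 2))
    (hne : u ≠ 0) :
    Real.sqrt (∑' n : ℕ, ‖u n‖ ^ 2) ≤
      2 * Real.sqrt (∑' n : ℕ, (n : ℝ) ^ 2 * ‖u n‖ ^ 2) *
        A / (A - Real.log
          ((∑' n : ℕ, Real.exp (-A * n) * ‖u n‖ ^ 2) / ∑' n : ℕ, ‖u n‖ ^ 2)) := by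
  obtain ⟨n₀, hn₀⟩ := Function.ne_iff.mp hne
  have hw : ∀ n, 0 ≤ ‖u n‖ ^ 2 := fun n => by positivity
  have hw_le : ∀ n : ℕ, ‖u n‖ ^ 2 ≤ (n : ℝ) ^ 2 * ‖u n‖ ^ 2
    | 0 => by simp [h0]
    | n + 1 => le_mul_of_one_le_left (hw _) (one_le_pow₀ (by simp))
  have hu : Summable fun n => ‖u n‖ ^ 2 := hnu.of_nonneg_of_le hw hw_le
  have hS : 0 < ∑' n, ‖u n‖ ^ 2 := hu.tsum_pos hw n₀ (pow_pos (norm_pos_iff.mpr hn₀) 2)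
  have hST : √(∑' n, ‖u n‖ ^ 2) ≤ √(∑' n : ℕ, (n : ℝ) ^ 2 * ‖u n‖ ^ 2) :=
    Real.sqrt_le_sqrt (hu.tsum_le_tsum hw_le hnu)
  have hexp_le : ∀ n : ℕ, Real.exp (-A * n) * ‖u n‖ ^ 2 ≤ ‖u n‖ ^ 2 := fun n =>
    mul_le_of_le_one_left (hw n) (Real.exp_le_one_iff.mpr (by nlinarith [n.cast_nonneg (α := ℝ)]))
  have hexp : Summable fun n : ℕ => Real.exp (-A * n) * ‖u n‖ ^ 2 :=
    hu.of_nonneg_of_le (fun n => by positivity) hexp_le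
  have hlog_nonpos := Real.log_nonpos (by positivity)
    (div_le_one_of_le₀ (hexp.tsum_le_tsum hexp_le hu) hS.le)
  have hneg_log_le := neg_log_tsum_exp_neg_mul_div_tsum_mul_sqrt_le (by linarith) hw hu hS hnu hexp
  rw [le_div_iff₀ (by linarith)]
  nlinarith [mul_le_mul_of_nonneg_left hST (by linarith : (0 : ℝ) ≤ A)]

/-- Inequality (2.13): for `A ≥ 1` and a nonzero square-summable sequence
`(u_n)_{n ≥ 1}` (modelled by `u : ℕ → ℂ` with `u 0 = 0`) with `(n u_n) ∈ ℓ²`,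
`‖u‖_{ℓ²} ≤ 2 (∑ n² |u_n|²)^{1/2} · A / (A - ln((1/‖u‖²) ∑ e^{-An} |u_n|²))`. -/
theorem stmt11 (A : ℝ) (hA : 1 ≤ A) (u : ℕ → ℂ) (h0 : u 0 = 0)
    (hu : Summable (fun n : ℕ => ‖u n‖ ^ 2))
    (hnu : Summable (fun n : ℕ => (n : ℝ) ^ 2 * ‖u n‖ ^ 2))
    (hne : u ≠ 0) :
    Real.sqrt (∑' n : ℕ, ‖u n‖ ^ 2) ≤
      2 * Real.sqrt (∑' n : ℕ, (n : ℝ) ^ 2 * ‖u n‖ ^ 2) *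
        A / (A - Real.log
          ((∑' n : ℕ, Real.exp (-A * n) * ‖u n‖ ^ 2) / ∑' n : ℕ, ‖u n‖ ^ 2)) :=
  stmt11_general A hA u h0 hnu hne
end

section
/- Let m ∈ ℝ, let ω₁ be convex decreasing on (m,∞) with ω₁(∞)=0 and ω₂ convex increasing with ω₂(∞)=∞, and let 1 ≤ p < ∞. Define Ψ_p(t) = (ω₂⁻¹(t))^{1/p} for t > ω₂(m) and Φ_p(t) = 1/(ω₁⁻¹(t))^{1/p} for t ∈ (0, ω₁(m)), Φ_p(0)=0. If 1/(ω₁⁻¹)^{1/p} is concave on (0, ω₁(m)), then (Φ_p, Ψ_p) satisfies the admissibility hypotheses and H_{Φ_p,Ψ_p}(t) = 1/(ω₂ ∘ ω₁⁻¹)(t), i.e. (Φ_p, Ψ_p) is an optimal pair for (ω₁, ω₂). -/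
/-!
The inverses `ω₁⁻¹ : (0, L₁) → (m, ∞)` and `ω₂⁻¹ : (L₂, ∞) → (m, ∞)` exist by the intermediate
value theorem and inherit strict monotonicity and unboundedness. The inverse of a convex increasing
function is concave, and `x ↦ x ^ (1/p)` is concave and increasing on `[0, ∞)`, so `Ψ_p` is concave.
The delicate point is that the real powers are taken of nonnegative numbers, i.e. `0 ≤ m`: the
concave function `Φ_p` is continuous on `(0, L₁)`, while `Φ_p (ω₁ x) = x ^ (-1/p)` blows up as
`x → 0⁺`, so `0 ∉ (m, ∞)`. Optimality holds because `Ψ_p ∘ ω₂` and `1 / (Φ_p ∘ ω₁)` both equal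
`x ↦ x ^ (1/p)` on `(m, ∞)`.
-/

open Set Function Filter Topology

section InvFunOn

variable {α β : Type*} [LinearOrder α] [Preorder β] [Nonempty α] {f : α → β} {s : Set α}
  {t : Set β}

theorem StrictMonoOn.strictMonoOn_invFunOn (hf : StrictMonoOn f s) (hst : SurjOn f s t) :
    StrictMonoOn (invFunOn f s) t := fun x hx y hy hxy => by
  rwa [← hf.lt_iff_lt (hst.mapsTo_invFunOn hx) (hst.mapsTo_invFunOn hy),
    hst.rightInvOn_invFunOn hx, hst.rightInvOn_invFunOn hy]

theorem StrictAntiOn.strictAntiOn_invFunOn (hf : StrictAntiOn f s) (hst : SurjOn f s t) :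
    StrictAntiOn (invFunOn f s) t := fun x hx y hy hxy => by
  rwa [← hf.lt_iff_gt (hst.mapsTo_invFunOn hx) (hst.mapsTo_invFunOn hy),
    hst.rightInvOn_invFunOn hx, hst.rightInvOn_invFunOn hy]

theorem StrictMonoOn.tendsto_invFunOn_atTop {l : Filter β} (hf : StrictMonoOn f s)
    (hst : SurjOn f s t) (hs : s ∈ atTop) (ht : t ∈ l) (hl : ∀ x ∈ s, ∀ᶠ y in l, f x ≤ y) :
    Tendsto (invFunOn f s) l atTop := by
  refine tendsto_atTop.2 fun N => ?_
  obtain ⟨x, hxs, hNx⟩ := ((eventually_mem_set.2 hs).and (eventually_ge_atTop N)).exists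
  filter_upwards [ht, hl x hxs] with y hyt hxy
  rw [← hst.rightInvOn_invFunOn hyt, hf.le_iff_le hxs (hst.mapsTo_invFunOn hyt)] at hxy
  exact hNx.trans hxy

theorem StrictAntiOn.tendsto_invFunOn_atTop {l : Filter β} (hf : StrictAntiOn f s)
    (hst : SurjOn f s t) (hs : s ∈ atTop) (ht : t ∈ l) (hl : ∀ x ∈ s, ∀ᶠ y in l, y ≤ f x) :
    Tendsto (invFunOn f s) l atTop := by
  refine tendsto_atTop.2 fun N => ?_
  obtain ⟨x, hxs, hNx⟩ := ((eventually_mem_set.2 hs).and (eventually_ge_atTop N)).exists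
  filter_upwards [ht, hl x hxs] with y hyt hxy
  rw [← hst.rightInvOn_invFunOn hyt, hf.le_iff_ge (hst.mapsTo_invFunOn hyt) hxs] at hxy
  exact hNx.trans hxy

end InvFunOn

theorem ConvexOn.concaveOn_invFunOn {𝕜 E β : Type*} [Semiring 𝕜] [PartialOrder 𝕜]
    [AddCommMonoid E] [LinearOrder E] [SMul 𝕜 E] [Nonempty E]
    [AddCommMonoid β] [PartialOrder β] [SMul 𝕜 β]
    {f : E → β} {s : Set E} {t : Set β} (hf : ConvexOn 𝕜 s f) (hmono : StrictMonoOn f s)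
    (hst : SurjOn f s t) (ht : Convex 𝕜 t) : ConcaveOn 𝕜 t (invFunOn f s) := by
  refine ⟨ht, fun x hx y hy a b ha hb hab => ?_⟩
  have hxy := ht hx hy ha hb hab
  rw [← hmono.le_iff_le (hf.1 (hst.mapsTo_invFunOn hx) (hst.mapsTo_invFunOn hy) ha hb hab)
    (hst.mapsTo_invFunOn hxy), hst.rightInvOn_invFunOn hxy]
  calc f (a • invFunOn f s x + b • invFunOn f s y)
      ≤ a • f (invFunOn f s x) + b • f (invFunOn f s y) :=
        hf.2 (hst.mapsTo_invFunOn hx) (hst.mapsTo_invFunOn hy) ha hb hab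
    _ = a • x + b • y := by rw [hst.rightInvOn_invFunOn hx, hst.rightInvOn_invFunOn hy]

theorem ConcaveOn.rpow {E : Type*} [AddCommMonoid E] [Module ℝ E] {f : E → ℝ} {s : Set E}
    {q : ℝ} (hf : ConcaveOn ℝ s f) (hf₀ : ∀ x ∈ s, 0 ≤ f x) (hq₀ : 0 ≤ q) (hq₁ : q ≤ 1) :
    ConcaveOn ℝ s fun x => f x ^ q := by
  refine ⟨hf.1, fun x hx y hy a b ha hb hab => ?_⟩
  calc a • f x ^ q + b • f y ^ q ≤ (a • f x + b • f y) ^ q :=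
        (Real.concaveOn_rpow hq₀ hq₁).2 (hf₀ x hx) (hf₀ y hy) ha hb hab
    _ ≤ f (a • x + b • y) ^ q := Real.rpow_le_rpow
        (add_nonneg (smul_nonneg ha (hf₀ x hx)) (smul_nonneg hb (hf₀ y hy)))
        (hf.2 hx hy ha hb hab) hq₀

theorem StrictMonoOn.mapsTo_Ioi_of_tendsto {f : ℝ → ℝ} {m L : ℝ} (hf : StrictMonoOn f (Ioi m))
    (hL : Tendsto f (𝓝[>] m) (𝓝 L)) : MapsTo f (Ioi m) (Ioi L) := by
  intro x (hx : m < x)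
  obtain ⟨y, hmy, hyx⟩ := exists_between hx
  have hLy : L ≤ f y := le_of_tendsto hL <| by
    filter_upwards [Ioo_mem_nhdsGT hmy] with z hz
    exact (hf hz.1 hmy hz.2).le
  exact hLy.trans_lt (hf hmy hx hyx)

theorem nonneg_of_continuousOn_of_comp_eq_one_div_rpow {m q : ℝ} {f Φ : ℝ → ℝ} {s : Set ℝ}
    (hq : 0 < q) (hs : IsOpen s) (hΦ : ContinuousOn Φ s) (hf : ContinuousOn f (Ioi m))
    (hfs : MapsTo f (Ioi m) s) (hΦf : ∀ x ∈ Ioi m, Φ (f x) = 1 / x ^ q) : 0 ≤ m := by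
  by_contra! hm
  have h0 : (0 : ℝ) ∈ Ioi m := hm
  have hcont : ContinuousAt (Φ ∘ f) 0 :=
    (hΦ.continuousAt (hs.mem_nhds (hfs h0))).comp (hf.continuousAt (isOpen_Ioi.mem_nhds h0))
  have hblowup : Tendsto (Φ ∘ f) (𝓝[>] 0) atTop := by
    refine (tendsto_rpow_neg_nhdsGT_zero (neg_neg_of_pos hq)).congr' ?_
    filter_upwards [self_mem_nhdsWithin] with x (hx : 0 < x)
    rw [comp_apply, hΦf x (hm.trans hx), Real.rpow_neg hx.le, one_div]
  exact not_tendsto_nhds_of_tendsto_atTop hblowup _ (hcont.tendsto.mono_left nhdsWithin_le_nhds)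

section RpowOfInverse

variable {f : ℝ → ℝ} {s t : Set ℝ} {q : ℝ}

theorem StrictMonoOn.strictMonoOn_invFunOn_rpow (hf : StrictMonoOn f s) (hst : SurjOn f s t)
    (hs : s ⊆ Ici 0) (hq : 0 < q) : StrictMonoOn (fun y => invFunOn f s y ^ q) t :=
  (Real.strictMonoOn_rpow_Ici_of_exponent_pos hq).comp (hf.strictMonoOn_invFunOn hst)
    (hst.mapsTo_invFunOn.mono_right hs)

theorem StrictAntiOn.strictMonoOn_one_div_invFunOn_rpow (hf : StrictAntiOn f s)
    (hst : SurjOn f s t) (hs : s ⊆ Ioi 0) (hq : 0 < q) :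
    StrictMonoOn (fun y => 1 / invFunOn f s y ^ q) t := fun x hx y hy hxy => by
  have hpos : 0 < invFunOn f s y := hs (hst.mapsTo_invFunOn hy)
  exact one_div_lt_one_div_of_lt (Real.rpow_pos_of_pos hpos q)
    (Real.rpow_lt_rpow hpos.le (hf.strictAntiOn_invFunOn hst hx hy hxy) hq)

theorem StrictAntiOn.tendsto_one_div_invFunOn_rpow {m L : ℝ} (hf : StrictAntiOn f (Ioi m))
    (hmaps : MapsTo f (Ioi m) (Ioo 0 L)) (hsurj : SurjOn f (Ioi m) (Ioo 0 L)) (hq : 0 < q) :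
    Tendsto (fun y => 1 / invFunOn f (Ioi m) y ^ q) (𝓝[>] 0) (𝓝 0) := by
  have hL : 0 < L := (hmaps (lt_add_one m)).1.trans (hmaps (lt_add_one m)).2
  have hinv_top := hf.tendsto_invFunOn_atTop hsurj (Ioi_mem_atTop m) (Ioo_mem_nhdsGT hL)
    fun x hx => (eventually_le_nhds (hmaps hx).1).filter_mono nhdsWithin_le_nhds
  simpa only [one_div, Pi.inv_def, comp_apply] using
    ((tendsto_rpow_atTop hq).comp hinv_top).inv_tendsto_atTop

end RpowOfInverse

theorem stmt14_general (m : ℝ) (ω₁ ω₂ : ℝ → ℝ) (L₁ L₂ : ℝ) (p : ℝ) (hp : 1 ≤ p)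
    (hω₁pos : ∀ t ∈ Ioi m, 0 < ω₁ t ∧ ω₁ t < L₁)
    (hω₁conv : ConvexOn ℝ (Ioi m) ω₁)
    (hω₁anti : StrictAntiOn ω₁ (Ioi m))
    (hω₁lim : Tendsto ω₁ atTop (nhds 0))
    (hω₁m : Tendsto ω₁ (nhdsWithin m (Ioi m)) (nhds L₁))
    (hω₂conv : ConvexOn ℝ (Ioi m) ω₂)
    (hω₂mono : StrictMonoOn ω₂ (Ioi m))
    (hω₂lim : Tendsto ω₂ atTop atTop)
    (hω₂m : Tendsto ω₂ (nhdsWithin m (Ioi m)) (nhds L₂))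
    (hconc : ConcaveOn ℝ (Ioo (0 : ℝ) L₁)
      (fun t => 1 / (Function.invFunOn ω₁ (Ioi m) t) ^ (1 / p))) :
    -- `Φ_p` satisfies (2.7)
    (StrictMonoOn (fun t => 1 / (Function.invFunOn ω₁ (Ioi m) t) ^ (1 / p))
        (Ioo (0 : ℝ) L₁) ∧
      ConcaveOn ℝ (Ioo (0 : ℝ) L₁)
        (fun t => 1 / (Function.invFunOn ω₁ (Ioi m) t) ^ (1 / p)) ∧
      Tendsto (fun t => 1 / (Function.invFunOn ω₁ (Ioi m) t) ^ (1 / p))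
        (nhdsWithin 0 (Ioi 0)) (nhds 0)) ∧
    -- `Ψ_p` satisfies (2.8)
    (StrictMonoOn (fun t => (Function.invFunOn ω₂ (Ioi m) t) ^ (1 / p)) (Ioi L₂) ∧
      ConcaveOn ℝ (Ioi L₂) (fun t => (Function.invFunOn ω₂ (Ioi m) t) ^ (1 / p)) ∧
      Tendsto (fun t => (Function.invFunOn ω₂ (Ioi m) t) ^ (1 / p)) atTop atTop) ∧
    -- (2.9)
    (∀ t ∈ Ioi m,
      1 ≤ (1 / (Function.invFunOn ω₁ (Ioi m) (ω₁ t)) ^ (1 / p)) *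
            (Function.invFunOn ω₂ (Ioi m) (ω₂ t)) ^ (1 / p)) ∧
    -- optimality: `H_{Φ_p,Ψ_p} = 1/(ω₂ ∘ ω₁⁻¹)`
    (∀ t ∈ Ioo (0 : ℝ) L₁,
      1 / Function.invFunOn (fun s => (Function.invFunOn ω₂ (Ioi m) s) ^ (1 / p))
            (Ioi L₂) (1 / (1 / (Function.invFunOn ω₁ (Ioi m) t) ^ (1 / p))) =
        1 / ω₂ (Function.invFunOn ω₁ (Ioi m) t)) := by
  have hq₀ : 0 < 1 / p := by positivity
  have hsurj₁ : SurjOn ω₁ (Ioi m) (Ioo 0 L₁) :=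
    isPreconnected_Ioi.intermediate_value_Ioo (le_principal_iff.2 (Ioi_mem_atTop m))
      (le_principal_iff.2 self_mem_nhdsWithin) (hω₁conv.continuousOn isOpen_Ioi) hω₁lim hω₁m
  have hsurj₂ : SurjOn ω₂ (Ioi m) (Ioi L₂) :=
    isPreconnected_Ioi.intermediate_value_Ioi (le_principal_iff.2 self_mem_nhdsWithin)
      (le_principal_iff.2 (Ioi_mem_atTop m)) (hω₂conv.continuousOn isOpen_Ioi) hω₂m hω₂lim
  have hm : 0 ≤ m :=
    nonneg_of_continuousOn_of_comp_eq_one_div_rpow hq₀ isOpen_Ioo (hconc.continuousOn isOpen_Ioo)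
      (hω₁conv.continuousOn isOpen_Ioi) hω₁pos fun x hx => by
        rw [hω₁anti.injOn.leftInvOn_invFunOn hx]
  have hΨ_mono := hω₂mono.strictMonoOn_invFunOn_rpow hsurj₂ (Ioi_subset_Ici hm) hq₀
  refine ⟨⟨hω₁anti.strictMonoOn_one_div_invFunOn_rpow hsurj₁ (Ioi_subset_Ioi hm) hq₀, hconc,
    hω₁anti.tendsto_one_div_invFunOn_rpow hω₁pos hsurj₁ hq₀⟩, ⟨hΨ_mono, ?_, ?_⟩,
    fun t ht => ?_, fun t ht => ?_⟩
  · exact (hω₂conv.concaveOn_invFunOn hω₂mono hsurj₂ (convex_Ioi L₂)).rpow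
      (fun y hy => hm.trans (hsurj₂.mapsTo_invFunOn hy).le) hq₀.le
      ((div_le_one (by positivity)).2 hp)
  · exact (tendsto_rpow_atTop hq₀).comp <| hω₂mono.tendsto_invFunOn_atTop hsurj₂
      (Ioi_mem_atTop m) (Ioi_mem_atTop L₂) fun x _ => eventually_ge_atTop (ω₂ x)
  · rw [hω₁anti.injOn.leftInvOn_invFunOn ht, hω₂mono.injOn.leftInvOn_invFunOn ht,
      one_div_mul_cancel (Real.rpow_pos_of_pos (hm.trans_lt ht) _).ne']
  · have hx := hsurj₁.mapsTo_invFunOn ht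
    have hΨ : invFunOn ω₂ (Ioi m) (ω₂ (invFunOn ω₁ (Ioi m) t)) ^ (1 / p) =
        invFunOn ω₁ (Ioi m) t ^ (1 / p) := by
      rw [hω₂mono.injOn.leftInvOn_invFunOn hx]
    rw [one_div_one_div, ← hΨ]
    exact congrArg (1 / ·) <| hΨ_mono.injOn.leftInvOn_invFunOn <|
      hω₂mono.mapsTo_Ioi_of_tendsto hω₂m hx

/-- Proposition 3.4: with `ω₁` convex decreasing (`ω₁(∞)=0`, `ω₁(m)=L₁`), `ω₂` convex
increasing (`ω₂(∞)=∞`, `ω₂(m)=L₂`), `p ≥ 1`, `Ψ_p(t) = (ω₂⁻¹ t)^{1/p}` on `(L₂,∞)` and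
`Φ_p(t) = 1/(ω₁⁻¹ t)^{1/p}` on `(0,L₁)`: if `1/(ω₁⁻¹)^{1/p}` is concave on `(0,L₁)`,
then `(Φ_p, Ψ_p)` satisfies (2.7)–(2.9) and
`H_{Φ_p,Ψ_p}(t) = 1/(ω₂ ∘ ω₁⁻¹)(t)` on `(0,L₁)`; i.e. `(Φ_p, Ψ_p)` is an optimal pair
for `(ω₁, ω₂)`. -/
theorem stmt14 (m : ℝ) (ω₁ ω₂ : ℝ → ℝ) (L₁ L₂ : ℝ) (p : ℝ) (hp : 1 ≤ p)
    (hω₁pos : ∀ t ∈ Ioi m, 0 < ω₁ t ∧ ω₁ t < L₁)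
    (hω₁conv : ConvexOn ℝ (Ioi m) ω₁)
    (hω₁anti : StrictAntiOn ω₁ (Ioi m))
    (hω₁lim : Tendsto ω₁ atTop (nhds 0))
    (hω₁m : Tendsto ω₁ (nhdsWithin m (Ioi m)) (nhds L₁))
    (hω₂pos : ∀ t ∈ Ioi m, 0 < ω₂ t)
    (hω₂conv : ConvexOn ℝ (Ioi m) ω₂)
    (hω₂mono : StrictMonoOn ω₂ (Ioi m))
    (hω₂lim : Tendsto ω₂ atTop atTop)
    (hω₂m : Tendsto ω₂ (nhdsWithin m (Ioi m)) (nhds L₂))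
    (hconc : ConcaveOn ℝ (Ioo (0 : ℝ) L₁)
      (fun t => 1 / (Function.invFunOn ω₁ (Ioi m) t) ^ (1 / p))) :
    -- `Φ_p` satisfies (2.7)
    (StrictMonoOn (fun t => 1 / (Function.invFunOn ω₁ (Ioi m) t) ^ (1 / p))
        (Ioo (0 : ℝ) L₁) ∧
      ConcaveOn ℝ (Ioo (0 : ℝ) L₁)
        (fun t => 1 / (Function.invFunOn ω₁ (Ioi m) t) ^ (1 / p)) ∧
      Tendsto (fun t => 1 / (Function.invFunOn ω₁ (Ioi m) t) ^ (1 / p))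
        (nhdsWithin 0 (Ioi 0)) (nhds 0)) ∧
    -- `Ψ_p` satisfies (2.8)
    (StrictMonoOn (fun t => (Function.invFunOn ω₂ (Ioi m) t) ^ (1 / p)) (Ioi L₂) ∧
      ConcaveOn ℝ (Ioi L₂) (fun t => (Function.invFunOn ω₂ (Ioi m) t) ^ (1 / p)) ∧
      Tendsto (fun t => (Function.invFunOn ω₂ (Ioi m) t) ^ (1 / p)) atTop atTop) ∧
    -- (2.9)
    (∀ t ∈ Ioi m,
      1 ≤ (1 / (Function.invFunOn ω₁ (Ioi m) (ω₁ t)) ^ (1 / p)) *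
            (Function.invFunOn ω₂ (Ioi m) (ω₂ t)) ^ (1 / p)) ∧
    -- optimality: `H_{Φ_p,Ψ_p} = 1/(ω₂ ∘ ω₁⁻¹)`
    (∀ t ∈ Ioo (0 : ℝ) L₁,
      1 / Function.invFunOn (fun s => (Function.invFunOn ω₂ (Ioi m) s) ^ (1 / p))
            (Ioi L₂) (1 / (1 / (Function.invFunOn ω₁ (Ioi m) t) ^ (1 / p))) =
        1 / ω₂ (Function.invFunOn ω₁ (Ioi m) t)) :=
  stmt14_general m ω₁ ω₂ L₁ L₂ p hp hω₁pos hω₁conv hω₁anti hω₁lim hω₁m hω₂conv hω₂mono hω₂lim hω₂m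
    hconc
end

section
/- Let (u_n)_{n∈ℕ} ⊂ (0,∞) with liminf u_n = 0, let ω₁ be its lower convex envelope, let p ≥ 1, α ∈ [0,1], and set ω₂(t) = (t+α)ᵖ for t ≥ 0, Ψ(t) = t^{1/p} − α for t ≥ αᵖ, φ(t) = ω₁(t)/tᵖ and Φ(t) = 1/φ⁻¹(t) for t > 0. Then (ω₁, ω₂, Φ, Ψ) is an admissible quadruplet and H_{Φ,Ψ}(t) = 1/(φ⁻¹(t) + α)ᵖ for every t > 0. -/
/-!
Write `φ s = ω₁ s / s ^ p`. Since `ω₁` is positive, decreasing, continuous and tends to `0`,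
`φ` is a decreasing bijection of `(0, ∞)`, so `Φ = 1 / φ⁻¹` is increasing and tends to `0`
at `0⁺`. Moreover `Φ` is the inverse of the increasing function `x ↦ φ x⁻¹ = x ^ p * ω₁ x⁻¹`,
so it is concave once that function is convex. Convexity comes from three inequalities at
`z = λ x + μ y`: convexity of `t ↦ t ^ p` gives `z ^ p ≤ λ x ^ p + μ y ^ p =: A`;
Chebyshev's inequality for the similarly ordered `x` and `x ^ (p - 1)` shows that
`z⁻¹` dominates the barycentre of `x⁻¹, y⁻¹` with weights `λ x ^ p / A, μ y ^ p / A`; and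
convexity of `ω₁` at that barycentre, together with its monotonicity, closes the chain.
The remaining assertions are direct computations with `Ψ t = t ^ (1 / p) - α`,
whose inverse is `s ↦ (s + α) ^ p`.
-/

open Set Function Filter Topology

theorem StrictAntiOn.strictAntiOn_invFunOn_s17 {α β : Type*} [LinearOrder α] [LinearOrder β]
    [Nonempty α] {f : α → β} {s : Set α} {t : Set β} (hf : StrictAntiOn f s)
    (hsurj : SurjOn f s t) : StrictAntiOn (invFunOn f s) t := by
  intro a ha b hb hab
  rwa [← hf.lt_iff_gt (hsurj.mapsTo_invFunOn ha) (hsurj.mapsTo_invFunOn hb),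
    hsurj.rightInvOn_invFunOn ha, hsurj.rightInvOn_invFunOn hb]

section InverseOnPositiveReals

variable {f : ℝ → ℝ}

theorem strictMonoOn_one_div_invFunOn (hf : StrictAntiOn f (Ioi 0))
    (hsurj : SurjOn f (Ioi 0) (Ioi 0)) :
    StrictMonoOn (fun t => 1 / invFunOn f (Ioi 0) t) (Ioi 0) :=
  fun _ ha _ hb hab => one_div_lt_one_div_of_lt (hsurj.mapsTo_invFunOn hb)
    (hf.strictAntiOn_invFunOn_s17 hsurj ha hb hab)

theorem tendsto_invFunOn_nhdsGT_zero (hf : StrictAntiOn f (Ioi 0))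
    (hmaps : MapsTo f (Ioi 0) (Ioi 0)) (hsurj : SurjOn f (Ioi 0) (Ioi 0)) :
    Tendsto (invFunOn f (Ioi 0)) (𝓝[>] 0) atTop := by
  rw [tendsto_atTop]
  intro M
  have hM : max M 1 ∈ Ioi (0 : ℝ) := mem_Ioi.2 (lt_max_of_lt_right one_pos)
  filter_upwards [Ioo_mem_nhdsGT (hmaps hM)] with t ht
  calc M ≤ max M 1 := le_max_left M 1
    _ = invFunOn f (Ioi 0) (f (max M 1)) := (hf.injOn.leftInvOn_invFunOn hM).symm
    _ ≤ invFunOn f (Ioi 0) t := (hf.strictAntiOn_invFunOn_s17 hsurj ht.1 (hmaps hM) ht.2).le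

theorem concaveOn_one_div_invFunOn (hf : StrictAntiOn f (Ioi 0))
    (hsurj : SurjOn f (Ioi 0) (Ioi 0)) (hconv : ConvexOn ℝ (Ioi 0) (fun x => f x⁻¹)) :
    ConcaveOn ℝ (Ioi 0) (fun t => 1 / invFunOn f (Ioi 0) t) := by
  refine ⟨convex_Ioi 0, fun a ha b hb l m hl hm hlm => ?_⟩
  set g := invFunOn f (Ioi 0)
  have hg : MapsTo g (Ioi 0) (Ioi 0) := hsurj.mapsTo_invFunOn
  have hfg : ∀ t ∈ Ioi (0 : ℝ), f (g t) = t := fun t ht => hsurj.rightInvOn_invFunOn ht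
  have hc : l • a + m • b ∈ Ioi (0 : ℝ) := convex_Ioi 0 ha hb hl hm hlm
  have hz : l • (g a)⁻¹ + m • (g b)⁻¹ ∈ Ioi (0 : ℝ) :=
    convex_Ioi 0 (inv_pos.2 (hg ha)) (inv_pos.2 (hg hb)) hl hm hlm
  have hf_le : f (l • (g a)⁻¹ + m • (g b)⁻¹)⁻¹ ≤ f (g (l • a + m • b)) := by
    have := hconv.2 (mem_Ioi.2 (inv_pos.2 (hg ha))) (mem_Ioi.2 (inv_pos.2 (hg hb))) hl hm hlm
    simp only [inv_inv, hfg a ha, hfg b hb] at this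
    rwa [hfg _ hc]
  have hg_le : g (l • a + m • b) ≤ (l • (g a)⁻¹ + m • (g b)⁻¹)⁻¹ :=
    (hf.le_iff_ge (mem_Ioi.2 (inv_pos.2 hz)) (hg hc)).1 hf_le
  simpa only [one_div, inv_inv, smul_eq_mul] using one_div_le_one_div_of_le (hg hc) hg_le

end InverseOnPositiveReals

theorem add_mul_add_le_of_sub_mul_sub_nonneg {a b c d l m : ℝ} (hl : 0 ≤ l) (hm : 0 ≤ m)
    (hlm : l + m = 1) (h : 0 ≤ (a - b) * (c - d)) :
    (l * a + m * b) * (l * c + m * d) ≤ l * (a * c) + m * (b * d) := by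
  obtain rfl : m = 1 - l := by linarith
  nlinarith [mul_nonneg (mul_nonneg hl hm) h]

section DivRpow

variable {ω : ℝ → ℝ} {p : ℝ}

theorem strictAntiOn_div_rpow (hpos : ∀ s ∈ Ioi (0 : ℝ), 0 < ω s)
    (hanti : AntitoneOn ω (Ioi 0)) (hp : 0 < p) :
    StrictAntiOn (fun s => ω s / s ^ p) (Ioi 0) := by
  intro a ha b hb hab
  calc ω b / b ^ p < ω b / a ^ p :=
        div_lt_div_of_pos_left (hpos b hb) (Real.rpow_pos_of_pos ha p)
          (Real.rpow_lt_rpow (le_of_lt ha) hab hp)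
    _ ≤ ω a / a ^ p :=
        div_le_div_of_nonneg_right (hanti ha hb hab.le) (Real.rpow_nonneg (le_of_lt ha) p)

theorem mapsTo_div_rpow (hpos : ∀ s ∈ Ioi (0 : ℝ), 0 < ω s) :
    MapsTo (fun s => ω s / s ^ p) (Ioi 0) (Ioi 0) :=
  fun s hs => div_pos (hpos s hs) (Real.rpow_pos_of_pos hs p)

theorem tendsto_div_rpow_nhdsGT_zero (hpos : ∀ s ∈ Ioi (0 : ℝ), 0 < ω s)
    (hanti : AntitoneOn ω (Ioi 0)) (hp : 0 < p) :
    Tendsto (fun s => ω s / s ^ p) (𝓝[>] 0) atTop := by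
  have h1 : (1 : ℝ) ∈ Ioi 0 := mem_Ioi.2 one_pos
  refine tendsto_atTop_mono' _ ?_
    ((tendsto_rpow_neg_nhdsGT_zero (neg_neg_of_pos hp)).const_mul_atTop (hpos 1 h1))
  filter_upwards [Ioo_mem_nhdsGT one_pos] with s hs
  rw [Real.rpow_neg hs.1.le, ← div_eq_mul_inv]
  exact div_le_div_of_nonneg_right (hanti hs.1 h1 hs.2.le) (Real.rpow_nonneg hs.1.le p)

theorem surjOn_div_rpow (hpos : ∀ s ∈ Ioi (0 : ℝ), 0 < ω s) (hanti : AntitoneOn ω (Ioi 0))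
    (hcont : ContinuousOn ω (Ioi 0)) (hlim : Tendsto ω atTop (𝓝 0)) (hp : 0 < p) :
    SurjOn (fun s => ω s / s ^ p) (Ioi 0) (Ioi 0) := by
  intro b hb
  have hφcont : ContinuousOn (fun s => ω s / s ^ p) (Ioi 0) :=
    hcont.div (continuousOn_id.rpow_const fun x hx => Or.inl (ne_of_gt hx))
      fun x hx => (Real.rpow_pos_of_pos hx p).ne'
  obtain ⟨a, hba, ha⟩ :=
    (((tendsto_div_rpow_nhdsGT_zero hpos hanti hp).eventually_gt_atTop b).and
      self_mem_nhdsWithin).exists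
  obtain ⟨c, hcb, hc⟩ :=
    (((hlim.div_atTop (tendsto_rpow_atTop hp)).eventually_lt_const hb).and
      (eventually_gt_atTop 0)).exists
  exact (isPreconnected_Ioi.image _ hφcont).Icc_subset ⟨c, hc, rfl⟩ ⟨a, ha, rfl⟩ ⟨hcb.le, hba.le⟩

theorem convexOn_rpow_mul_apply_inv (hp : 1 ≤ p) (hconv : ConvexOn ℝ (Ioi 0) ω)
    (hanti : AntitoneOn ω (Ioi 0)) (hnonneg : ∀ s ∈ Ioi (0 : ℝ), 0 ≤ ω s) :
    ConvexOn ℝ (Ioi 0) (fun x => x ^ p * ω x⁻¹) := by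
  refine ⟨convex_Ioi 0, fun x hx y hy l m hl hm hlm => ?_⟩
  have hx' : (0 : ℝ) < x := hx
  have hy' : (0 : ℝ) < y := hy
  have hz : l • x + m • y ∈ Ioi (0 : ℝ) := convex_Ioi 0 hx hy hl hm hlm
  simp only [smul_eq_mul] at hz ⊢
  set z := l * x + m * y
  set A := l * x ^ p + m * y ^ p
  set B := l * (x ^ p / x) + m * (y ^ p / y)
  have hzA : z ^ p ≤ A := by
    simpa only [smul_eq_mul] using (convexOn_rpow hp).2 hx'.le hy'.le hl hm hlm
  have hA : 0 < A := (Real.rpow_pos_of_pos hz p).trans_le hzA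
  have hsimilar : 0 ≤ (x - y) * (x ^ p / x - y ^ p / y) := by
    rw [← Real.rpow_sub_one hx'.ne', ← Real.rpow_sub_one hy'.ne']
    rcases le_total x y with hxy | hxy
    · exact mul_nonneg_of_nonpos_of_nonpos (sub_nonpos.2 hxy)
        (sub_nonpos.2 (Real.rpow_le_rpow hx'.le hxy (by linarith)))
    · exact mul_nonneg (sub_nonneg.2 hxy)
        (sub_nonneg.2 (Real.rpow_le_rpow hy'.le hxy (by linarith)))
  have hzB : z * B ≤ A := by
    have := add_mul_add_le_of_sub_mul_sub_nonneg hl hm hlm hsimilar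
    rwa [mul_div_cancel₀ _ hx'.ne', mul_div_cancel₀ _ hy'.ne'] at this
  set w₁ := l * x ^ p / A
  set w₂ := m * y ^ p / A
  have hw₁ : 0 ≤ w₁ := by positivity
  have hw₂ : 0 ≤ w₂ := by positivity
  have hw : w₁ + w₂ = 1 := by rw [← add_div, div_self hA.ne']
  have hbary : w₁ • x⁻¹ + w₂ • y⁻¹ = B / A := by simp only [smul_eq_mul, w₁, w₂, B]; ring
  have hBA : B / A ∈ Ioi (0 : ℝ) :=
    hbary ▸ convex_Ioi 0 (inv_pos.2 hx') (inv_pos.2 hy') hw₁ hw₂ hw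
  have hBAz : B / A ≤ z⁻¹ := by rwa [div_le_iff₀ hA, le_inv_mul_iff₀ hz]
  have hω := hconv.2 (inv_pos.2 hx') (inv_pos.2 hy') hw₁ hw₂ hw
  rw [hbary, smul_eq_mul, smul_eq_mul] at hω
  have hz' : z⁻¹ ∈ Ioi (0 : ℝ) := mem_Ioi.2 (inv_pos.2 hz)
  calc z ^ p * ω z⁻¹ ≤ A * ω z⁻¹ := mul_le_mul_of_nonneg_right hzA (hnonneg _ hz')
    _ ≤ A * ω (B / A) := mul_le_mul_of_nonneg_left (hanti hBA hz' hBAz) hA.le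
    _ ≤ A * (w₁ * ω x⁻¹ + w₂ * ω y⁻¹) := mul_le_mul_of_nonneg_left hω hA.le
    _ = l * (x ^ p * ω x⁻¹) + m * (y ^ p * ω y⁻¹) := by
      simp only [w₁, w₂]; field_simp

theorem convexOn_div_rpow_apply_inv (hp : 1 ≤ p) (hconv : ConvexOn ℝ (Ioi 0) ω)
    (hanti : AntitoneOn ω (Ioi 0)) (hnonneg : ∀ s ∈ Ioi (0 : ℝ), 0 ≤ ω s) :
    ConvexOn ℝ (Ioi 0) (fun x => (fun s => ω s / s ^ p) x⁻¹) :=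
  (convexOn_rpow_mul_apply_inv hp hconv hanti hnonneg).congr fun x hx => by
    dsimp only
    rw [Real.inv_rpow (le_of_lt hx), div_inv_eq_mul, mul_comm]

theorem invFunOn_div_rpow_apply_le (hpos : ∀ s ∈ Ioi (0 : ℝ), 0 < ω s)
    (hanti : AntitoneOn ω (Ioi 0)) (hsurj : SurjOn (fun s => ω s / s ^ p) (Ioi 0) (Ioi 0))
    (hp : 0 < p) {t : ℝ} (ht : 1 ≤ t) : invFunOn (fun s => ω s / s ^ p) (Ioi 0) (ω t) ≤ t := by
  have ht0 : t ∈ Ioi (0 : ℝ) := mem_Ioi.2 (one_pos.trans_le ht)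
  have hφt : ω t / t ^ p ≤ ω t :=
    div_le_self (hpos t ht0).le (Real.one_le_rpow ht hp.le)
  calc invFunOn (fun s => ω s / s ^ p) (Ioi 0) (ω t)
      ≤ invFunOn (fun s => ω s / s ^ p) (Ioi 0) (ω t / t ^ p) :=
        ((strictAntiOn_div_rpow hpos hanti hp).strictAntiOn_invFunOn_s17 hsurj).antitoneOn
          (mapsTo_div_rpow hpos ht0) (hpos t ht0) hφt
    _ = t := (strictAntiOn_div_rpow hpos hanti hp).injOn.leftInvOn_invFunOn ht0

end DivRpow

section RpowSub

variable {p α : ℝ}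

theorem strictMonoOn_rpow_one_div_sub (hp : 0 < p) (hα : 0 ≤ α) :
    StrictMonoOn (fun t : ℝ => t ^ (1 / p) - α) (Ioi (α ^ p)) := fun _ ha _ _ hab =>
  sub_lt_sub_right (Real.rpow_lt_rpow ((Real.rpow_nonneg hα p).trans (le_of_lt ha)) hab
    (one_div_pos.2 hp)) α

theorem concaveOn_rpow_one_div_sub (hp : 1 ≤ p) (hα : 0 ≤ α) :
    ConcaveOn ℝ (Ioi (α ^ p)) (fun t : ℝ => t ^ (1 / p) - α) :=
  ((Real.concaveOn_rpow (one_div_nonneg.2 (zero_le_one.trans hp)) (div_le_one_of_le₀ hp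
    (zero_le_one.trans hp))).subset (fun _ ht => (Real.rpow_nonneg hα p).trans (le_of_lt ht))
    (convex_Ioi _)).sub (convexOn_const _ (convex_Ioi _))

theorem invFunOn_rpow_one_div_sub (hp : 0 < p) (hα : 0 ≤ α) {s : ℝ} (hs : 0 < s) :
    invFunOn (fun t : ℝ => t ^ (1 / p) - α) (Ioi (α ^ p)) s = (s + α) ^ p := by
  have hmem : (s + α) ^ p ∈ Ioi (α ^ p) :=
    mem_Ioi.2 (Real.rpow_lt_rpow hα (by linarith) hp)
  have hΨ : ((s + α) ^ p) ^ (1 / p) - α = s := by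
    rw [one_div, Real.rpow_rpow_inv (by linarith) hp.ne', add_sub_cancel_right]
  have hinv := (strictMonoOn_rpow_one_div_sub hp hα).injOn.leftInvOn_invFunOn hmem
  rwa [hΨ] at hinv

theorem monotoneOn_rpow_neg_mul_apply_rpow_sub {ω : ℝ → ℝ} (hanti : AntitoneOn ω (Ioi 0))
    (hnonneg : ∀ s ∈ Ioi (0 : ℝ), 0 ≤ ω s) (hp : 0 < p) (hα₀ : 0 ≤ α) (hα₁ : α ≤ 1) :
    MonotoneOn (fun t : ℝ => (1 - α * t ^ (1 / p)) ^ (-p) * ω (t ^ (-(1 / p)) - α))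
      (Ioo 0 1) := by
  have hbase : ∀ t ∈ Ioo (0 : ℝ) 1, 0 < 1 - α * t ^ (1 / p) := fun t ht => by
    have := Real.rpow_lt_one ht.1.le ht.2 (one_div_pos.2 hp)
    nlinarith [Real.rpow_nonneg ht.1.le (1 / p)]
  have harg : ∀ t ∈ Ioo (0 : ℝ) 1, 0 < t ^ (-(1 / p)) - α := fun t ht => by
    linarith [Real.one_lt_rpow_of_pos_of_lt_one_of_neg ht.1 ht.2
      (neg_neg_of_pos (one_div_pos.2 hp))]
  refine MonotoneOn.mul (fun a ha b hb hab => ?_) (fun a ha b hb hab => ?_)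
    (fun t ht => Real.rpow_nonneg (hbase t ht).le _) (fun t ht => hnonneg _ (harg t ht))
  · refine Real.antitoneOn_rpow_Ioi_of_exponent_nonpos (neg_nonpos.2 hp.le) (hbase b hb)
      (hbase a ha) (sub_le_sub_left (mul_le_mul_of_nonneg_left ?_ hα₀) 1)
    exact Real.rpow_le_rpow ha.1.le hab (one_div_nonneg.2 hp.le)
  · refine hanti (harg b hb) (harg a ha) (sub_le_sub_right ?_ α)
    exact Real.antitoneOn_rpow_Ioi_of_exponent_nonpos (neg_nonpos.2 (one_div_nonneg.2 hp.le))
      ha.1 hb.1 hab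

end RpowSub

theorem stmt17_general
    (ω₁ : ℝ → ℝ) (p α : ℝ) (hp : 1 ≤ p) (hα : α ∈ Icc (0 : ℝ) 1)
    (hω₁pos : ∀ t ∈ Ici (0 : ℝ), 0 < ω₁ t)
    (hω₁conv : ConvexOn ℝ (Ici (0 : ℝ)) ω₁)
    (hω₁anti : StrictAntiOn ω₁ (Ici (0 : ℝ)))
    (hω₁lim : Tendsto ω₁ atTop (nhds 0)) :
    -- `Φ` satisfies (2.7) on `(0,∞)`
    (StrictMonoOn
        (fun t => 1 / Function.invFunOn (fun s => ω₁ s / s ^ p) (Ioi 0) t)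
        (Ioi (0 : ℝ)) ∧
      ConcaveOn ℝ (Ioi (0 : ℝ))
        (fun t => 1 / Function.invFunOn (fun s => ω₁ s / s ^ p) (Ioi 0) t) ∧
      Tendsto (fun t => 1 / Function.invFunOn (fun s => ω₁ s / s ^ p) (Ioi 0) t)
        (nhdsWithin 0 (Ioi 0)) (nhds 0)) ∧
    -- `Ψ` satisfies (2.8) on `(α^p, ∞)`
    (StrictMonoOn (fun t : ℝ => t ^ (1 / p) - α) (Ioi (α ^ p)) ∧
      ConcaveOn ℝ (Ioi (α ^ p)) (fun t : ℝ => t ^ (1 / p) - α) ∧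
      Tendsto (fun t : ℝ => t ^ (1 / p) - α) atTop atTop) ∧
    -- (2.9) holds on `(1,∞)`
    (∀ t ∈ Ioi (1 : ℝ),
      1 ≤ (1 / Function.invFunOn (fun s => ω₁ s / s ^ p) (Ioi 0) (ω₁ t)) *
            (((t + α) ^ p) ^ (1 / p) - α)) ∧
    -- `t ↦ (1/t) H⁻¹(t)` is nondecreasing on `(0,1)`
    MonotoneOn (fun t : ℝ => (1 - α * t ^ (1 / p)) ^ (-p) * ω₁ (t ^ (-(1 / p)) - α))
      (Ioo (0 : ℝ) 1) ∧
    -- the formula for `H_{Φ,Ψ}`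
    (∀ t ∈ Ioi (0 : ℝ),
      1 / Function.invFunOn (fun s : ℝ => s ^ (1 / p) - α) (Ioi (α ^ p))
          (1 / (1 / Function.invFunOn (fun s => ω₁ s / s ^ p) (Ioi 0) t)) =
        1 / (Function.invFunOn (fun s => ω₁ s / s ^ p) (Ioi 0) t + α) ^ p) := by
  obtain ⟨hα₀, hα₁⟩ := hα
  have hp₀ : 0 < p := zero_lt_one.trans_le hp
  have hpos : ∀ s ∈ Ioi (0 : ℝ), 0 < ω₁ s := fun s hs => hω₁pos s (Ioi_subset_Ici_self hs)
  have hnonneg : ∀ s ∈ Ioi (0 : ℝ), 0 ≤ ω₁ s := fun s hs => (hpos s hs).le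
  have hanti : AntitoneOn ω₁ (Ioi 0) := (hω₁anti.mono Ioi_subset_Ici_self).antitoneOn
  have hconv : ConvexOn ℝ (Ioi 0) ω₁ := hω₁conv.subset Ioi_subset_Ici_self (convex_Ioi 0)
  have hφanti := strictAntiOn_div_rpow hpos hanti hp₀
  have hφsurj := surjOn_div_rpow hpos hanti (hconv.continuousOn isOpen_Ioi) hω₁lim hp₀
  have hgpos := hφsurj.mapsTo_invFunOn
  refine ⟨⟨strictMonoOn_one_div_invFunOn hφanti hφsurj,
      concaveOn_one_div_invFunOn hφanti hφsurj
        (convexOn_div_rpow_apply_inv hp hconv hanti hnonneg), ?_⟩,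
    ⟨strictMonoOn_rpow_one_div_sub hp₀ hα₀, concaveOn_rpow_one_div_sub hp hα₀, ?_⟩,
    fun t ht => ?_, monotoneOn_rpow_neg_mul_apply_rpow_sub hanti hnonneg hp₀ hα₀ hα₁,
    fun t ht => ?_⟩
  · simp only [one_div]
    exact (tendsto_invFunOn_nhdsGT_zero hφanti (mapsTo_div_rpow hpos) hφsurj).inv_tendsto_atTop
  · simpa only [sub_eq_add_neg] using
      tendsto_atTop_add_const_right atTop (-α) (tendsto_rpow_atTop (one_div_pos.2 hp₀))
  · have ht₀ : t ∈ Ioi (0 : ℝ) := mem_Ioi.2 (zero_lt_one.trans ht)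
    rw [one_div p, Real.rpow_rpow_inv (by linarith [mem_Ioi.1 ht₀]) hp₀.ne',
      add_sub_cancel_right, one_div_mul_eq_div, one_le_div (hgpos (hpos t ht₀))]
    exact invFunOn_div_rpow_apply_le hpos hanti hφsurj hp₀ (le_of_lt ht)
  · rw [one_div_one_div, invFunOn_rpow_one_div_sub hp₀ hα₀ (hgpos ht)]

/-- Proposition 4.6: let `(u_n) ⊂ (0,∞)` with `liminf u_n = 0`, let `ω₁` be its lower
convex envelope (a positive, decreasing, convex function on `[0,∞)` with
`ω₁(n) ≤ u_n` and `ω₁(∞) = 0`), `p ≥ 1`, `α ∈ [0,1]`, `ω₂(t) = (t+α)ᵖ`,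
`Ψ(t) = t^{1/p} - α`, `φ(t) = ω₁(t)/tᵖ` and `Φ(t) = 1/φ⁻¹(t)`.  Then
`(ω₁, ω₂, Φ, Ψ)` is an admissible quadruplet and
`H_{Φ,Ψ}(t) = 1/(φ⁻¹(t)+α)ᵖ` for every `t > 0`. -/
theorem stmt17 (u : ℕ → ℝ) (hu : ∀ n, 0 < u n)
    (hliminf : Filter.liminf u Filter.atTop = 0)
    (ω₁ : ℝ → ℝ) (p α : ℝ) (hp : 1 ≤ p) (hα : α ∈ Icc (0 : ℝ) 1)
    -- `ω₁` is the lower convex envelope of `(u_n)`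
    (henv : ∀ n : ℕ, 0 < ω₁ n ∧ ω₁ n ≤ u n)
    (hω₁pos : ∀ t ∈ Ici (0 : ℝ), 0 < ω₁ t)
    (hω₁conv : ConvexOn ℝ (Ici (0 : ℝ)) ω₁)
    (hω₁anti : StrictAntiOn ω₁ (Ici (0 : ℝ)))
    (hω₁lim : Tendsto ω₁ atTop (nhds 0)) :
    -- `Φ` satisfies (2.7) on `(0,∞)`
    (StrictMonoOn
        (fun t => 1 / Function.invFunOn (fun s => ω₁ s / s ^ p) (Ioi 0) t)
        (Ioi (0 : ℝ)) ∧
      ConcaveOn ℝ (Ioi (0 : ℝ))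
        (fun t => 1 / Function.invFunOn (fun s => ω₁ s / s ^ p) (Ioi 0) t) ∧
      Tendsto (fun t => 1 / Function.invFunOn (fun s => ω₁ s / s ^ p) (Ioi 0) t)
        (nhdsWithin 0 (Ioi 0)) (nhds 0)) ∧
    -- `Ψ` satisfies (2.8) on `(α^p, ∞)`
    (StrictMonoOn (fun t : ℝ => t ^ (1 / p) - α) (Ioi (α ^ p)) ∧
      ConcaveOn ℝ (Ioi (α ^ p)) (fun t : ℝ => t ^ (1 / p) - α) ∧
      Tendsto (fun t : ℝ => t ^ (1 / p) - α) atTop atTop) ∧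
    -- (2.9) holds on `(1,∞)`
    (∀ t ∈ Ioi (1 : ℝ),
      1 ≤ (1 / Function.invFunOn (fun s => ω₁ s / s ^ p) (Ioi 0) (ω₁ t)) *
            (((t + α) ^ p) ^ (1 / p) - α)) ∧
    -- `t ↦ (1/t) H⁻¹(t)` is nondecreasing on `(0,1)`
    MonotoneOn (fun t : ℝ => (1 - α * t ^ (1 / p)) ^ (-p) * ω₁ (t ^ (-(1 / p)) - α))
      (Ioo (0 : ℝ) 1) ∧
    -- the formula for `H_{Φ,Ψ}`
    (∀ t ∈ Ioi (0 : ℝ),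
      1 / Function.invFunOn (fun s : ℝ => s ^ (1 / p) - α) (Ioi (α ^ p))
          (1 / (1 / Function.invFunOn (fun s => ω₁ s / s ^ p) (Ioi 0) t)) =
        1 / (Function.invFunOn (fun s => ω₁ s / s ^ p) (Ioi 0) t + α) ^ p) :=
  stmt17_general ω₁ p α hp hα hω₁pos hω₁conv hω₁anti hω₁lim
end
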